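/- arXiv:1311.5031 — 9 statements merged into one kernel-verified Lean document; each statement's English description precedes it below -/
import Mathlib

section
/- Let λ and μ be partitions and let i and j be positive integers such that λ_i > μ_i, λ_i > λ_{i+1}, μ_j > λ_j, and μ_j > μ_{j+1}. Let λ̄ be the partition obtained from λ by diminishing its i-th part by 1, and let μ̄ be the partition obtained from μ by diminishing its j-th part by 1. Then every monomial constituent ν of m_λ̄·m_μ̄ satisfies λ ⊆ ν or μ ⊆ ν. -/
/-- A partition: a weakly decreasing sequence `part 0 ≥ part 1 ≥ ⋯` of natural
numbers that is eventually zero.  `part i` is the `(i+1)`-st part `λ_{i+1}`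
(so we use 0-based indexing throughout). -/
structure Partition' where
  part : ℕ → ℕ
  antitone : ∀ ⦃i j : ℕ⦄, i ≤ j → part j ≤ part i
  eventually_zero : ∃ N, ∀ i, N ≤ i → part i = 0

/-- `ν` is a monomial constituent of `m_λ · m_μ`: there is a permutation `σ` of
the indices such that `ν` is the weakly decreasing rearrangement (witnessed by
the bijection `τ`) of the sequence `i ↦ λ_i + μ_{σ i}`. -/
def IsMonomialConstituent (l m n : Partition') : Prop :=
  ∃ σ τ : Equiv.Perm ℕ, ∀ i, n.part i = l.part (τ i) + m.part (σ (τ i))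

/-- Key counting lemma: if `n` is the sorted rearrangement (via `τ`) of `a`,
`n.part i ≤ c`, and `a k > c` for all `k < i`, then `a k ≤ c` for all `k ≥ i`. -/
lemma key_count (n : Partition') (a : ℕ → ℕ) (τ : Equiv.Perm ℕ)
    (hn : ∀ k, n.part k = a (τ k)) (i c : ℕ) (hni : n.part i ≤ c)
    (hlt : ∀ k < i, c < a k) : ∀ k, i ≤ k → a k ≤ c := by
  intro k0 hk0
  by_contra hgt
  push_neg at hgt
  have hmem : ∀ k ∈ insert k0 (Finset.range i), τ.symm k ∈ Finset.range i := by
    intro k hk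
    have hak : c < a k := by
      rcases Finset.mem_insert.1 hk with h | h
      · exact h ▸ hgt
      · exact hlt k (Finset.mem_range.1 h)
    simp only [Finset.mem_range]
    by_contra hge
    push_neg at hge
    have h1 : n.part (τ.symm k) ≤ n.part i := n.antitone hge
    have h2 : n.part (τ.symm k) = a k := by rw [hn, Equiv.apply_symm_apply]
    omega
  have hcard : (insert k0 (Finset.range i)).card ≤ (Finset.range i).card :=
    Finset.card_le_card_of_injOn (fun k => τ.symm k) hmem
      (fun x _ y _ h => τ.symm.injective h)
  have hnot : k0 ∉ Finset.range i := by simp; omega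
  rw [Finset.card_insert_of_notMem hnot, Finset.card_range] at hcard
  omega

/-- If `λ_i > μ_i`, `λ_i > λ_{i+1}`, `μ_j > λ_j`, `μ_j > μ_{j+1}`, and `λ̄`, `μ̄`
are obtained from `λ`, `μ` by diminishing the `i`-th part of `λ` and the `j`-th
part of `μ` by `1`, then every monomial constituent `ν` of `m_λ̄ · m_μ̄`
satisfies `λ ⊆ ν` or `μ ⊆ ν`.  (Indices are 0-based.) -/
theorem monomialConstituent_diminish (l m lBar mBar : Partition') (i j : ℕ)
    (h1 : m.part i < l.part i) (h2 : l.part (i + 1) < l.part i)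
    (h3 : l.part j < m.part j) (h4 : m.part (j + 1) < m.part j)
    (hlBar : ∀ k, lBar.part k = if k = i then l.part i - 1 else l.part k)
    (hmBar : ∀ k, mBar.part k = if k = j then m.part j - 1 else m.part k) :
    ∀ n : Partition', IsMonomialConstituent lBar mBar n →
      (∀ k, l.part k ≤ n.part k) ∨ (∀ k, m.part k ≤ n.part k) := by
  rintro n ⟨σ, τ, hn⟩
  set a : ℕ → ℕ := fun k => lBar.part k + mBar.part (σ k) with ha
  set b : ℕ → ℕ := fun p => lBar.part (σ.symm p) + mBar.part p with hb
  have hna : ∀ k, n.part k = a (τ k) := hn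
  have hnb : ∀ k, n.part k = b ((τ.trans σ) k) := by
    intro k
    simp only [hb, Equiv.trans_apply, Equiv.symm_apply_apply]
    exact hn k
  have hab : ∀ k, a k = b (σ k) := by
    intro k; simp only [ha, hb, Equiv.symm_apply_apply]
  have hlpos : 1 ≤ l.part i := by omega
  have hmpos : 1 ≤ m.part j := by omega
  have hlBari : lBar.part i = l.part i - 1 := by rw [hlBar]; simp
  have hmBarj : mBar.part j = m.part j - 1 := by rw [hmBar]; simp
  -- ν dominates lBar and mBar
  have hdoml : ∀ k, lBar.part k ≤ n.part k := by
    intro k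
    by_contra hc
    push_neg at hc
    have hpos : 1 ≤ lBar.part k := by omega
    have := key_count n a τ hna k (lBar.part k - 1) (by omega)
      (fun t ht => by
        have h5 : lBar.part k ≤ lBar.part t := lBar.antitone (le_of_lt ht)
        have : lBar.part t ≤ a t := Nat.le_add_right _ _
        omega) k le_rfl
    have : lBar.part k ≤ a k := Nat.le_add_right _ _
    omega
  have hdomm : ∀ k, mBar.part k ≤ n.part k := by
    intro k
    by_contra hc
    push_neg at hc
    have hpos : 1 ≤ mBar.part k := by omega
    have := key_count n b (τ.trans σ) hnb k (mBar.part k - 1) (by omega)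
      (fun t ht => by
        have h5 : mBar.part k ≤ mBar.part t := mBar.antitone (le_of_lt ht)
        have : mBar.part t ≤ b t := Nat.le_add_left _ _
        omega) k le_rfl
    have : mBar.part k ≤ b k := Nat.le_add_left _ _
    omega
  by_contra hcon
  push_neg at hcon
  obtain ⟨⟨k1, hk1⟩, ⟨k2, hk2⟩⟩ := hcon
  -- failure can only happen at i resp. j
  have hk1i : k1 = i := by
    by_contra hne
    have := hdoml k1
    rw [hlBar k1, if_neg hne] at this
    omega
  have hk2j : k2 = j := by
    by_contra hne
    have := hdomm k2
    rw [hmBar k2, if_neg hne] at this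
    omega
  rw [hk1i] at hk1
  rw [hk2j] at hk2
  -- the two tail bounds
  have hA : ∀ k, i ≤ k → a k ≤ lBar.part i := by
    refine key_count n a τ hna i (lBar.part i) (by omega) ?_
    intro k hk
    have h5 : lBar.part k = l.part k := by rw [hlBar, if_neg (by omega)]
    have h6 : l.part i ≤ l.part k := l.antitone (le_of_lt hk)
    have : lBar.part k ≤ a k := Nat.le_add_right _ _
    omega
  have hB : ∀ p, j ≤ p → b p ≤ mBar.part j := by
    refine key_count n b (τ.trans σ) hnb j (mBar.part j) (by omega) ?_
    intro p hp
    have h5 : mBar.part p = m.part p := by rw [hmBar, if_neg (by omega)]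
    have h6 : m.part j ≤ m.part p := m.antitone (le_of_lt hp)
    have : mBar.part p ≤ b p := Nat.le_add_left _ _
    omega
  -- mBar (σ i) = 0 and σ i ≥ j
  have hai : a i = lBar.part i + mBar.part (σ i) := rfl
  have hσi0 : mBar.part (σ i) = 0 := by have := hA i le_rfl; omega
  have hσij : j ≤ σ i := by
    by_contra hlt'
    push_neg at hlt'
    have h5 : mBar.part (σ i) = m.part (σ i) := by rw [hmBar, if_neg (by omega)]
    have h6 : m.part j ≤ m.part (σ i) := m.antitone (le_of_lt hlt')
    omega
  have h5 : lBar.part i ≤ mBar.part j := by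
    have := hB (σ i) hσij
    rw [← hab i] at this
    omega
  -- lBar (σ⁻¹ j) = 0 and σ⁻¹ j ≥ i
  have hbj : b j = lBar.part (σ.symm j) + mBar.part j := rfl
  have ht0 : lBar.part (σ.symm j) = 0 := by have := hB j le_rfl; omega
  have hti : i ≤ σ.symm j := by
    by_contra hlt'
    push_neg at hlt'
    have h6 : lBar.part (σ.symm j) = l.part (σ.symm j) := by rw [hlBar, if_neg (by omega)]
    have h7 : l.part i ≤ l.part (σ.symm j) := l.antitone (le_of_lt hlt')
    omega
  have h6 : mBar.part j ≤ lBar.part i := by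
    have := hA (σ.symm j) hti
    rw [hab (σ.symm j), Equiv.apply_symm_apply] at this
    omega
  -- i = j via cardinality
  have hfwd : ∀ k < i, σ k < j := by
    intro k hk
    by_contra hge
    push_neg at hge
    have hb1 : b (σ k) ≤ mBar.part j := hB (σ k) hge
    rw [← hab k] at hb1
    have h7 : lBar.part k = l.part k := by rw [hlBar, if_neg (by omega)]
    have h8 : l.part i ≤ l.part k := l.antitone (le_of_lt hk)
    have : lBar.part k ≤ a k := Nat.le_add_right _ _
    omega
  have hbwd : ∀ p < j, σ.symm p < i := by
    intro p hp
    by_contra hge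
    push_neg at hge
    have ha1 : a (σ.symm p) ≤ lBar.part i := hA (σ.symm p) hge
    rw [hab (σ.symm p), Equiv.apply_symm_apply] at ha1
    have h7 : mBar.part p = m.part p := by rw [hmBar, if_neg (by omega)]
    have h8 : m.part j ≤ m.part p := m.antitone (le_of_lt hp)
    have : mBar.part p ≤ b p := Nat.le_add_left _ _
    omega
  have hij : i ≤ j := by
    have := Finset.card_le_card_of_injOn (fun k => σ k)
      (fun k hk => Finset.mem_range.2 (hfwd k (Finset.mem_range.1 hk)))
      (fun x _ y _ h => σ.injective h)
    simpa using this
  have hji : j ≤ i := by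
    have := Finset.card_le_card_of_injOn (fun p => σ.symm p)
      (fun p hp => Finset.mem_range.2 (hbwd p (Finset.mem_range.1 hp)))
      (fun x _ y _ h => σ.symm.injective h)
    simpa using this
  have : i = j := le_antisymm hij hji
  rw [this] at h1
  omega
end

section
/- Let λ and μ be partitions that are both nonzero (i.e., each has at least one positive part). Then there exist two distinct nonzero partitions that are both monomial constituents of m_λ·m_μ. -/
/-- Any eventually-zero sequence of naturals can be rearranged into a partition. -/
lemma exists_partition_sort (a : ℕ → ℕ) (N : ℕ) (hN : ∀ i, N ≤ i → a i = 0) :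
    ∃ (p : Partition') (τ : Equiv.Perm ℕ), ∀ i, p.part i = a (τ i) := by
  classical
  set g : Fin N → ℕᵒᵈ := fun i => OrderDual.toDual (a i) with hg
  set σ : Equiv.Perm (Fin N) := Tuple.sort g with hσ
  have hmono : Monotone (g ∘ σ) := Tuple.monotone_sort g
  refine ⟨⟨fun i => if h : i < N then a (σ ⟨i, h⟩) else 0, ?_, ⟨N, ?_⟩⟩,
    σ.extendDomain (Fin.equivSubtype (n := N)), ?_⟩
  · intro i j hij
    by_cases hj : j < N
    · have hi : i < N := lt_of_le_of_lt hij hj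
      simp only [dif_pos hi, dif_pos hj]
      have := hmono (a := ⟨i, hi⟩) (b := ⟨j, hj⟩) (by exact hij)
      exact this
    · simp [dif_neg hj]
  · intro i hi
    simp [Nat.not_lt_of_le hi]
  · intro i
    show (if h : i < N then a (σ ⟨i, h⟩) else 0) = _
    by_cases hi : i < N
    · rw [dif_pos hi, Equiv.Perm.extendDomain_apply_subtype _ _ (p := fun k => k < N) hi]
      simp [Fin.equivSubtype]
    · rw [dif_neg hi, Equiv.Perm.extendDomain_apply_not_subtype _ _ (p := fun k => k < N) hi]
      exact (hN i (le_of_not_gt hi)).symm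

/-- If `λ` and `μ` are nonzero partitions, then `m_λ · m_μ` has at least two
distinct nonzero monomial constituents. -/
theorem monomialConstituent_two_distinct (l m : Partition')
    (hl : ∃ i, 0 < l.part i) (hm : ∃ i, 0 < m.part i) :
    ∃ n₁ n₂ : Partition', n₁ ≠ n₂ ∧ (∃ i, 0 < n₁.part i) ∧ (∃ i, 0 < n₂.part i) ∧
      IsMonomialConstituent l m n₁ ∧ IsMonomialConstituent l m n₂ := by
  classical
  obtain ⟨Nl, hNl⟩ := l.eventually_zero
  obtain ⟨Nm, hNm⟩ := m.eventually_zero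
  obtain ⟨il, hil⟩ := hl
  obtain ⟨im, him⟩ := hm
  have hl0 : 0 < l.part 0 := lt_of_lt_of_le hil (l.antitone (Nat.zero_le _))
  have hm0 : 0 < m.part 0 := lt_of_lt_of_le him (m.antitone (Nat.zero_le _))
  set N : ℕ := max Nl Nm with hNdef
  have hNl' : ∀ i, N ≤ i → l.part i = 0 := fun i hi => hNl i (le_trans (le_max_left _ _) hi)
  have hNm' : ∀ i, N ≤ i → m.part i = 0 := fun i hi => hNm i (le_trans (le_max_right _ _) hi)
  have hNpos : 0 < N := by
    have : il < Nl := by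
      by_contra h
      have := hNl il (le_of_not_gt h); omega
    have : 0 < Nl := by omega
    exact lt_of_lt_of_le this (le_max_left _ _)
  -- the block-swap involution
  set f : ℕ → ℕ := fun i => if i < N then i + N else if i < 2 * N then i - N else i with hf
  have hinv : Function.Involutive f := by
    intro i
    simp only [hf]
    split_ifs <;> omega
  -- the two summand sequences
  set a₂ : ℕ → ℕ := fun i => l.part i + m.part (f i) with ha₂
  have ha₂lt : ∀ i, i < N → a₂ i = l.part i := by
    intro i hi
    simp only [ha₂, hf, if_pos hi]
    rw [hNm' (i + N) (by omega)]
    omega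
  have ha₂mid : ∀ i, N ≤ i → i < 2 * N → a₂ i = m.part (i - N) := by
    intro i h1 h2
    simp only [ha₂, hf, if_neg (Nat.not_lt_of_le h1), if_pos h2]
    rw [hNl' i h1]
    omega
  have ha₂big : ∀ i, 2 * N ≤ i → a₂ i = 0 := by
    intro i hi
    simp only [ha₂, hf, if_neg (by omega : ¬ i < N), if_neg (Nat.not_lt_of_le hi)]
    rw [hNl' i (by omega), hNm' i (by omega)]
  have ha₂le : ∀ i, a₂ i ≤ max (l.part 0) (m.part 0) := by
    intro i
    rcases lt_or_ge i N with h | h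
    · rw [ha₂lt i h]; exact le_max_of_le_left (l.antitone (Nat.zero_le _))
    · rcases lt_or_ge i (2 * N) with h2 | h2
      · rw [ha₂mid i h h2]; exact le_max_of_le_right (m.antitone (Nat.zero_le _))
      · rw [ha₂big i h2]; exact Nat.zero_le _
  obtain ⟨p, τ, hp⟩ := exists_partition_sort a₂ (2 * N) ha₂big
  -- first constituent: the pointwise sum
  refine ⟨⟨fun i => l.part i + m.part i,
      fun i j hij => Nat.add_le_add (l.antitone hij) (m.antitone hij),
      ⟨N, fun i hi => by show l.part i + m.part i = 0; rw [hNl' i hi, hNm' i hi]⟩⟩, p, ?_, ⟨0, by positivity⟩, ?_, ?_, ?_⟩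
  · -- distinctness: compare part 0
    intro h
    have h0 : l.part 0 + m.part 0 = p.part 0 := congrFun (congrArg Partition'.part h) 0
    have h1 : p.part 0 ≤ max (l.part 0) (m.part 0) := by
      rw [hp 0]; exact ha₂le _
    omega
  · -- p is nonzero
    refine ⟨τ.symm 0, ?_⟩
    rw [hp, Equiv.apply_symm_apply, ha₂lt 0 hNpos]
    exact hl0
  · exact ⟨1, 1, fun i => rfl⟩
  · refine ⟨hinv.toPerm f, τ, fun i => ?_⟩
    rw [hp i]
    rfl
end

section
/- For all natural numbers x and y, the set I_(x,y) of all partitions λ with λ_{x+1} ≥ y+1 is a partition ideal, and it is monomial prime. -/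
/-- A partition ideal: upward closed for the containment order. -/
def IsPartitionIdeal (I : Set Partition') : Prop :=
  ∀ l m : Partition', l ∈ I → (∀ i, l.part i ≤ m.part i) → m ∈ I

/-- A set of partitions is monomial prime if it is not everything and whenever
every monomial constituent of `m_λ · m_μ` lies in it, `λ` or `μ` lies in it. -/
def IsMonomialPrime (I : Set Partition') : Prop :=
  I ≠ Set.univ ∧ ∀ l m : Partition',
    (∀ n : Partition', IsMonomialConstituent l m n → n ∈ I) → l ∈ I ∨ m ∈ I

/-- The block-swap map exchanging `[x, x+d)` and `[x+d, x+2d)`. -/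
private def sigmaFun (x d : ℕ) (i : ℕ) : ℕ :=
  if i < x then i else if i < x + d then i + d else if i < x + d + d then i - d else i

private lemma sigmaFun_involutive (x d : ℕ) : Function.Involutive (sigmaFun x d) := by
  intro i
  unfold sigmaFun
  split_ifs <;> omega

/-- Any finitely supported sequence of naturals has a weakly decreasing
rearrangement that is a partition. -/
private lemma exists_sorted (f : ℕ → ℕ) (N : ℕ) (hf : ∀ i, N ≤ i → f i = 0) :
    ∃ (n : Partition') (τ : Equiv.Perm ℕ), ∀ i, n.part i = f (τ i) := by
  set g : Fin N → ℕᵒᵈ := fun i => OrderDual.toDual (f i) with hg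
  set π : Equiv.Perm (Fin N) := Tuple.sort g with hπ
  have mono : Monotone (g ∘ π) := Tuple.monotone_sort g
  refine ⟨⟨fun i => if h : i < N then f (π ⟨i, h⟩) else 0, ?_, ⟨N, ?_⟩⟩,
    π.extendDomain (Fin.equivSubtype (n := N)), ?_⟩
  · intro i j hij
    split_ifs with hj hi hi
    · have : f (π ⟨j, hj⟩) ≤ f (π ⟨i, hi⟩) := mono (show (⟨i, hi⟩ : Fin N) ≤ ⟨j, hj⟩ from hij)
      exact this
    · omega
    · exact Nat.zero_le _
    · exact le_refl 0
  · intro i hi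
    simp [Nat.not_lt.mpr hi]
  · intro i
    by_cases h : i < N
    · have h1 := Equiv.Perm.extendDomain_apply_subtype π (Fin.equivSubtype (n := N)) (show i < N from h)
      simp only [Fin.equivSubtype] at h1 ⊢
      simp [h, h1]
    · have h1 : π.extendDomain (Fin.equivSubtype (n := N)) i = i :=
        Equiv.Perm.extendDomain_apply_not_subtype _ _ h
      simp [h, h1, hf i (Nat.not_lt.mp h)]

/-- For all `x y : ℕ`, the set `I_(x,y)` of partitions `λ` with `λ_{x+1} ≥ y+1`
(0-indexed: `part x ≥ y + 1`) is a partition ideal and is monomial prime. -/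

theorem Ixy_isPartitionIdeal_and_monomialPrime (x y : ℕ) :
    IsPartitionIdeal {l : Partition' | y + 1 ≤ l.part x} ∧
    IsMonomialPrime {l : Partition' | y + 1 ≤ l.part x} := by
  constructor
  · intro l m hl hlm
    exact le_trans hl (hlm x)
  constructor
  · intro hI
    have : (⟨fun _ => 0, fun _ _ _ => le_refl 0, ⟨0, fun _ _ => rfl⟩⟩ : Partition') ∈
        {l : Partition' | y + 1 ≤ l.part x} := hI ▸ Set.mem_univ _
    simp at this
  · intro l m h
    by_contra hc
    push_neg at hc
    obtain ⟨hl, hm⟩ := hc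
    simp only [Set.mem_setOf_eq, not_le] at hl hm
    have hlx : l.part x ≤ y := by omega
    have hmx : m.part x ≤ y := by omega
    obtain ⟨Nl, hNl⟩ := l.eventually_zero
    obtain ⟨Nm, hNm⟩ := m.eventually_zero
    set d : ℕ := max Nl Nm with hd
    set σ : Equiv.Perm ℕ := (sigmaFun_involutive x d).toPerm with hσ
    set f : ℕ → ℕ := fun i => l.part i + m.part (σ i) with hfdef
    have hσ_apply : ∀ i, σ i = sigmaFun x d i := fun _ => rfl
    have hfzero : ∀ i, x + d + d ≤ i → f i = 0 := by
      intro i hi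
      have hσi : σ i = i := by rw [hσ_apply]; unfold sigmaFun; split_ifs <;> omega
      simp only [hfdef, hσi]
      rw [hNl i (by omega), hNm i (by omega)]
    have key : ∀ i, x ≤ i → f i ≤ y := by
      intro i hi
      rcases lt_or_ge i (x + d) with h1 | h1
      · have hσi : σ i = i + d := by rw [hσ_apply]; unfold sigmaFun; split_ifs <;> omega
        have hm0 : m.part (i + d) = 0 := hNm _ (by omega)
        have := l.antitone hi
        simp only [hfdef, hσi, hm0]
        omega
      · rcases lt_or_ge i (x + d + d) with h2 | h2
        · have hσi : σ i = i - d := by rw [hσ_apply]; unfold sigmaFun; split_ifs <;> omega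
          have hl0 : l.part i = 0 := hNl _ (by omega)
          have : m.part (i - d) ≤ m.part x := m.antitone (by omega)
          simp only [hfdef, hσi, hl0]
          omega
        · have := hfzero i h2
          omega
    obtain ⟨n, τ, hn⟩ := exists_sorted f (x + d + d) hfzero
    have hnI : n ∈ {l : Partition' | y + 1 ≤ l.part x} :=
      h n ⟨σ, τ, fun i => hn i⟩
    simp only [Set.mem_setOf_eq] at hnI
    have hτ : ∀ j, j ≤ x → τ j < x := by
      intro j hj
      have h1 : y + 1 ≤ n.part j := le_trans hnI (n.antitone hj)
      rw [hn j] at h1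
      by_contra hcon
      push_neg at hcon
      have := key (τ j) hcon
      omega
    have hsub : (Finset.range (x + 1)).image τ ⊆ Finset.range x := by
      intro a ha
      simp only [Finset.mem_image, Finset.mem_range] at ha ⊢
      obtain ⟨j, hj, rfl⟩ := ha
      exact hτ j (by omega)
    have hcard := Finset.card_le_card hsub
    rw [Finset.card_image_of_injective _ τ.injective, Finset.card_range,
      Finset.card_range] at hcard
    omega
end

section
/- Every nonempty monomial prime partition ideal is of the form I_(x,y) for some natural numbers x and y. -/
section Aux

/-- The rectangle partition with `a` parts each equal to `b`. -/
def rect (a b : ℕ) : Partition' where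
  part i := if i < a then b else 0
  antitone := by
    intro i j hij
    show (if j < a then b else 0) ≤ (if i < a then b else 0)
    split_ifs <;> omega
  eventually_zero := ⟨a, fun i hi => if_neg (by omega)⟩

lemma rect_part (a b i : ℕ) : (rect a b).part i = if i < a then b else 0 := rfl

/-- number of (nonzero) rows -/
lemma rows_ex (l : Partition') : ∃ N, l.part N = 0 :=
  ⟨l.eventually_zero.choose, l.eventually_zero.choose_spec _ le_rfl⟩

noncomputable def rows (l : Partition') : ℕ := Nat.find (rows_ex l)

lemma rows_zero (l : Partition') : l.part (rows l) = 0 := Nat.find_spec (rows_ex l)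

lemma part_ne_zero_of_lt_rows {l : Partition'} {i : ℕ} (h : i < rows l) : l.part i ≠ 0 :=
  Nat.find_min (rows_ex l) h

lemma part_zero_of_rows_le {l : Partition'} {i : ℕ} (h : rows l ≤ i) : l.part i = 0 := by
  have := l.antitone h
  rw [rows_zero] at this
  omega

lemma rows_eq {l : Partition'} {N : ℕ} (h0 : l.part N = 0) (h : ∀ j < N, l.part j ≠ 0) :
    rows l = N := by
  unfold rows
  rw [Nat.find_eq_iff]
  exact ⟨h0, fun m hm hm0 => h m hm hm0⟩

lemma exists_ge_of_card {a : ℕ} {S : Finset ℕ} (h : a + 1 ≤ S.card) : ∃ i ∈ S, a ≤ i := by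
  by_contra hc
  push_neg at hc
  have hsub : S ⊆ Finset.range a := fun i hi => Finset.mem_range.2 (hc i hi)
  have := Finset.card_le_card hsub
  rw [Finset.card_range] at this
  omega

/-- A sorted sequence dominating `w ∘ π` termwise (for `w` antitone, `π` a permutation)
dominates `w` termwise. -/
lemma sorted_dominates (ν : Partition') (w : ℕ → ℕ) (hw : ∀ ⦃i j : ℕ⦄, i ≤ j → w j ≤ w i)
    (π : Equiv.Perm ℕ) (h : ∀ i, w (π i) ≤ ν.part i) (k : ℕ) : w k ≤ ν.part k := by
  obtain ⟨i, hiS, hik⟩ := exists_ge_of_card (a := k)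
    (S := (Finset.range (k+1)).image π.symm) (by
      rw [Finset.card_image_of_injective _ π.symm.injective, Finset.card_range])
  obtain ⟨t, ht, rfl⟩ := Finset.mem_image.1 hiS
  have ht' : t ≤ k := by
    have := Finset.mem_range.1 ht; omega
  calc w k ≤ w t := hw ht'
    _ = w (π (π.symm t)) := by rw [Equiv.apply_symm_apply]
    _ ≤ ν.part (π.symm t) := h _
    _ ≤ ν.part k := ν.antitone hik

lemma perm_maps {a : ℕ} (π : Equiv.Perm ℕ) (h : ∀ t, t < a → π.symm t < a) :
    ∀ j, j < a → π j < a := by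
  intro j hj
  have hsub : (Finset.range a).image π.symm ⊆ Finset.range a := by
    intro i hi
    obtain ⟨t, ht, rfl⟩ := Finset.mem_image.1 hi
    exact Finset.mem_range.2 (h t (Finset.mem_range.1 ht))
  have heq : (Finset.range a).image π.symm = Finset.range a :=
    Finset.eq_of_subset_of_card_le hsub (by
      rw [Finset.card_image_of_injective _ π.symm.injective])
  have hj' : j ∈ (Finset.range a).image π.symm := by
    rw [heq]; exact Finset.mem_range.2 hj
  obtain ⟨t, ht, hts⟩ := Finset.mem_image.1 hj'
  have : π j = t := by rw [← hts, Equiv.apply_symm_apply]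
  rw [this]
  exact Finset.mem_range.1 ht

variable {I : Set Partition'}

/-- Squaring step: if `R(a+1,b) ∈ I` and `R(a,2b) ∈ I` then `R(a,b) ∈ I`. -/
lemma core (hideal : IsPartitionIdeal I) (hprime : IsMonomialPrime I) {a b : ℕ}
    (h1 : rect (a+1) b ∈ I) (h2 : rect a (2*b) ∈ I) : rect a b ∈ I := by
  have key : ∀ ν : Partition', IsMonomialConstituent (rect a b) (rect a b) ν → ν ∈ I := by
    intro ν hc
    obtain ⟨σ, τ, hστ⟩ := hc
    simp only [rect_part] at hστ
    by_cases hA : b ≤ ν.part a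
    · refine hideal _ _ h1 (fun i => ?_)
      rw [rect_part]
      split_ifs with hi
      · exact le_trans hA (ν.antitone (by omega))
      · exact Nat.zero_le _
    · push_neg at hA
      -- any index i ≥ a has ν.part i < b
      have hsmall : ∀ i, a ≤ i → ν.part i < b := fun i hi => lt_of_le_of_lt (ν.antitone hi) hA
      -- σ.symm maps [0,a) into [0,a)
      have hσsymm : ∀ t, t < a → σ.symm t < a := by
        intro t ht
        by_contra hc'
        push_neg at hc'
        -- the set [0,a) ∪ {σ.symm t} has a+1 elements
        have hni : σ.symm t ∉ Finset.range a := by simp; omega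
        obtain ⟨i, hiS, hik⟩ := exists_ge_of_card (a := a)
          (S := (insert (σ.symm t) (Finset.range a)).image τ.symm) (by
            rw [Finset.card_image_of_injective _ τ.symm.injective,
              Finset.card_insert_of_notMem hni, Finset.card_range])
        obtain ⟨s, hs, rfl⟩ := Finset.mem_image.1 hiS
        have hτ : τ (τ.symm s) = s := Equiv.apply_symm_apply _ _
        have hb : b ≤ ν.part (τ.symm s) := by
          rw [hστ, hτ]
          rcases Finset.mem_insert.1 hs with hs1 | hs2
          · subst hs1
            rw [Equiv.apply_symm_apply]
            rw [if_pos ht]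
            split_ifs <;> omega
          · rw [if_pos (Finset.mem_range.1 hs2)]
            omega
        exact absurd hb (not_le.2 (hsmall _ hik))
      have hσ : ∀ j, j < a → σ j < a := perm_maps σ hσsymm
      -- τ.symm maps [0,a) into [0,a)
      have hτsymm : ∀ t, t < a → τ.symm t < a := by
        intro t ht
        by_contra hc'
        push_neg at hc'
        have hb : b ≤ ν.part (τ.symm t) := by
          rw [hστ, Equiv.apply_symm_apply, if_pos ht]
          omega
        exact absurd hb (not_le.2 (hsmall _ hc'))
      have hτ : ∀ j, j < a → τ j < a := perm_maps τ hτsymm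
      refine hideal _ _ h2 (fun i => ?_)
      rw [rect_part]
      split_ifs with hi
      · rw [hστ, if_pos (hτ i hi), if_pos (hσ _ (hτ i hi))]
        omega
      · exact Nat.zero_le _
  rcases hprime.2 (rect a b) (rect a b) key with h | h
  · exact h
  · exact h

/-- Column-shrinking: if `R(a,B) ∈ I`, `R(a+1,b) ∈ I` with `1 ≤ b ≤ B`,
then `R(a,b) ∈ I`. -/
lemma claimC (hideal : IsPartitionIdeal I) (hprime : IsMonomialPrime I) {a B : ℕ}
    (hB : rect a B ∈ I) :
    ∀ d b, B - b ≤ d → 1 ≤ b → b ≤ B → rect (a+1) b ∈ I → rect a b ∈ I := by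
  intro d
  induction d with
  | zero =>
    intro b hd hb hbB h1
    have h2 : rect a (2*b) ∈ I := by
      refine hideal _ _ hB (fun i => ?_)
      rw [rect_part, rect_part]
      split_ifs <;> omega
    exact core hideal hprime h1 h2
  | succ n ih =>
    intro b hd hb hbB h1
    by_cases hc : B ≤ 2*b
    · have h2 : rect a (2*b) ∈ I := by
        refine hideal _ _ hB (fun i => ?_)
        rw [rect_part, rect_part]
        split_ifs <;> omega
      exact core hideal hprime h1 h2
    · push_neg at hc
      have h1' : rect (a+1) (2*b) ∈ I := by
        refine hideal _ _ h1 (fun i => ?_)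
        rw [rect_part, rect_part]
        split_ifs <;> omega
      have h2 : rect a (2*b) ∈ I := ih (2*b) (by omega) (by omega) (by omega) h1'
      exact core hideal hprime h1 h2

/-- Every member of a monomial prime ideal contains a nonzero rectangle in the ideal. -/
lemma exists_rect (hideal : IsPartitionIdeal I) (hprime : IsMonomialPrime I)
    (h0 : ∃ p : Partition', p ∉ I) :
    ∀ n (l : Partition'), l.part 0 + rows l ≤ n → l ∈ I →
      ∃ a b, 1 ≤ a ∧ 1 ≤ b ∧ rect a b ∈ I ∧ ∀ i, (rect a b).part i ≤ l.part i := by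
  intro n
  induction n with
  | zero =>
    intro l hm hl
    exfalso
    obtain ⟨p, hp⟩ := h0
    refine hp (hideal l p hl (fun i => ?_))
    have := l.antitone (Nat.zero_le i)
    omega
  | succ n ih =>
    intro l hm hl
    -- l is nonzero
    have hpos : 1 ≤ l.part 0 := by
      by_contra hc
      push_neg at hc
      obtain ⟨p, hp⟩ := h0
      refine hp (hideal l p hl (fun i => ?_))
      have := l.antitone (Nat.zero_le i)
      omega
    have hrpos : 1 ≤ rows l := by
      by_contra hc
      push_neg at hc
      have := part_zero_of_rows_le (l := l) (i := 0) (by omega)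
      omega
    by_cases hrect : ∀ i, i < rows l → l.part i = l.part 0
    · -- l is a rectangle
      refine ⟨rows l, l.part 0, hrpos, hpos, ?_, ?_⟩
      · refine hideal l _ hl (fun i => ?_)
        rw [rect_part]
        split_ifs with hi
        · exact (hrect i hi).le
        · exact le_of_eq (part_zero_of_rows_le (by omega))
      · intro i
        rw [rect_part]
        split_ifs with hi
        · rw [hrect i hi]
        · exact Nat.zero_le _
    · push_neg at hrect
      obtain ⟨i₀, hi₀r, hi₀⟩ := hrect
      have hex : ∃ k, l.part k < l.part 0 := by
        refine ⟨i₀, lt_of_le_of_ne (l.antitone (Nat.zero_le i₀)) hi₀⟩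
      classical
      set k := Nat.find hex with hk
      have hkspec : l.part k < l.part 0 := Nat.find_spec hex
      have hkmin : ∀ j, j < k → ¬ l.part j < l.part 0 := fun j hj => Nat.find_min hex hj
      have hk1 : 1 ≤ k := by
        rcases Nat.eq_zero_or_pos k with h | h
        · rw [h] at hkspec; omega
        · exact h
      have hkr : k < rows l := lt_of_le_of_lt (Nat.find_min' hex (lt_of_le_of_ne (l.antitone (Nat.zero_le i₀)) hi₀)) hi₀r
      have hkne : l.part k ≠ 0 := part_ne_zero_of_lt_rows hkr
      -- the two pieces
      set l' : Partition' :=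
        { part := fun i => if i < k then l.part i else 0
          antitone := by
            intro i j hij
            show (if j < k then l.part j else 0) ≤ (if i < k then l.part i else 0)
            split_ifs with h1 h2 h2
            · exact l.antitone hij
            · omega
            · exact Nat.zero_le _
            · exact le_rfl
          eventually_zero := ⟨k, fun i hi => if_neg (by omega)⟩ } with hl'def
      set m' : Partition' :=
        { part := fun i => if i < k then l.part k else l.part i
          antitone := by
            intro i j hij
            show (if j < k then l.part k else l.part j) ≤ (if i < k then l.part k else l.part i)
            split_ifs with h1 h2 h2
            · exact le_rfl
            · omega
            · exact l.antitone (by omega)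
            · exact l.antitone hij
          eventually_zero := by
            obtain ⟨N, hN⟩ := l.eventually_zero
            exact ⟨k + N, fun i hi => by
              show (if i < k then l.part k else l.part i) = 0
              rw [if_neg (by omega)]
              exact hN i (by omega)⟩ } with hm'def
      have hl'part : ∀ i, l'.part i = if i < k then l.part i else 0 := fun i => rfl
      have hm'part : ∀ i, m'.part i = if i < k then l.part k else l.part i := fun i => rfl
      have key : ∀ ν : Partition', IsMonomialConstituent l' m' ν → ν ∈ I := by
        intro ν hc
        obtain ⟨σ, τ, hστ⟩ := hc
        have H1 : ∀ j, l'.part j ≤ ν.part j := by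
          refine sorted_dominates ν l'.part l'.antitone τ (fun i => ?_)
          rw [hστ i]
          exact Nat.le_add_right _ _
        have H2 : ∀ j, m'.part j ≤ ν.part j := by
          refine sorted_dominates ν m'.part m'.antitone (τ.trans σ) (fun i => ?_)
          rw [hστ i, Equiv.trans_apply]
          exact Nat.le_add_left _ _
        refine hideal l ν hl (fun i => ?_)
        by_cases hik : i < k
        · have := H1 i
          rw [hl'part, if_pos hik] at this
          exact this
        · have := H2 i
          rw [hm'part, if_neg hik] at this
          exact this
      rcases hprime.2 l' m' key with h | h
      · -- l' ∈ I; it's smaller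
        have hrl' : rows l' = k := by
          refine rows_eq (by rw [hl'part, if_neg (by omega)]) (fun j hj => ?_)
          rw [hl'part, if_pos hj]
          exact part_ne_zero_of_lt_rows (lt_trans hj hkr)
        have hms : l'.part 0 + rows l' ≤ n := by
          rw [hrl', hl'part, if_pos (by omega)]
          omega
        obtain ⟨a, b, ha, hb, hab, hle⟩ := ih l' hms h
        refine ⟨a, b, ha, hb, hab, fun i => le_trans (hle i) ?_⟩
        rw [hl'part]
        split_ifs
        · exact le_rfl
        · exact Nat.zero_le _
      · -- m' ∈ I; it's smaller
        have hrm' : rows m' = rows l := by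
          refine rows_eq ?_ (fun j hj => ?_)
          · rw [hm'part, if_neg (by omega)]
            exact rows_zero l
          · rw [hm'part]
            split_ifs
            · exact hkne
            · exact part_ne_zero_of_lt_rows hj
        have hms : m'.part 0 + rows m' ≤ n := by
          rw [hrm', hm'part, if_pos (by omega)]
          omega
        obtain ⟨a, b, ha, hb, hab, hle⟩ := ih m' hms h
        refine ⟨a, b, ha, hb, hab, fun i => le_trans (hle i) ?_⟩
        rw [hm'part]
        split_ifs with hik
        · exact l.antitone (by omega)
        · exact le_rfl

end Aux

/-- Every nonempty monomial prime partition ideal is of the form `I_(x,y)`. -/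
theorem monomialPrime_eq_Ixy (I : Set Partition') (hne : I.Nonempty)
    (hideal : IsPartitionIdeal I) (hprime : IsMonomialPrime I) :
    ∃ x y : ℕ, I = {l : Partition' | y + 1 ≤ l.part x} := by
  classical
  have h0 : ∃ p : Partition', p ∉ I := by
    by_contra hc
    push_neg at hc
    exact hprime.1 (Set.eq_univ_of_forall hc)
  obtain ⟨l₀, hl₀⟩ := hne
  obtain ⟨a₀, b₀, ha₀, hb₀, hrect₀, -⟩ :=
    exists_rect hideal hprime h0 (l₀.part 0 + rows l₀) l₀ le_rfl hl₀
  have hexx : ∃ x, ∃ b, rect (x+1) (b+1) ∈ I := by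
    refine ⟨a₀ - 1, b₀ - 1, ?_⟩
    have : a₀ - 1 + 1 = a₀ := by omega
    rw [this]
    have : b₀ - 1 + 1 = b₀ := by omega
    rw [this]
    exact hrect₀
  set x := Nat.find hexx with hx
  have hexy : ∃ y, rect (x+1) (y+1) ∈ I := Nat.find_spec hexx
  set y := Nat.find hexy with hy
  have hxy : rect (x+1) (y+1) ∈ I := Nat.find_spec hexy
  refine ⟨x, y, Set.eq_of_subset_of_subset ?_ ?_⟩
  · -- I ⊆ I_(x,y)
    intro l hl
    obtain ⟨a, b, ha, hb, hab, hle⟩ :=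
      exists_rect hideal hprime h0 (l.part 0 + rows l) l le_rfl hl
    -- x + 1 ≤ a
    have hxa : x + 1 ≤ a := by
      have : x ≤ a - 1 := Nat.find_min' hexx ⟨b - 1, by
        have h1 : a - 1 + 1 = a := by omega
        have h2 : b - 1 + 1 = b := by omega
        rw [h1, h2]; exact hab⟩
      omega
    -- y + 1 ≤ b
    have hyb : y + 1 ≤ b := by
      by_contra hc
      push_neg at hc
      -- b ≤ y, so rect (x+1) b ∉ I and column shrinking gives a contradiction
      have hbase : rect (x+1) b ∉ I := by
        have : ¬ rect (x+1) ((b-1)+1) ∈ I := Nat.find_min hexy (by omega)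
        have hbb : b - 1 + 1 = b := by omega
        rwa [hbb] at this
      have hstep : ∀ j, rect (x+1+j) b ∉ I := by
        intro j
        induction j with
        | zero => exact hbase
        | succ n ihn =>
          intro hmem
          refine ihn ?_
          have hBmem : rect (x+1+n) (y+1) ∈ I := by
            refine hideal _ _ hxy (fun i => ?_)
            rw [rect_part, rect_part]
            split_ifs <;> omega
          have : x + 1 + n + 1 = x + 1 + (n+1) := by omega
          refine claimC hideal hprime hBmem (y + 1 - b) b (by omega) (by omega) (by omega) ?_
          rw [this]
          exact hmem
      have := hstep (a - (x+1))
      have haa : x + 1 + (a - (x+1)) = a := by omega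
      rw [haa] at this
      exact this hab
    -- conclude
    have h1 := hle (a - 1)
    rw [rect_part, if_pos (by omega)] at h1
    have h2 : l.part (a-1) ≤ l.part x := l.antitone (by omega)
    simp only [Set.mem_setOf_eq]
    omega
  · -- I_(x,y) ⊆ I
    intro l hl
    simp only [Set.mem_setOf_eq] at hl
    refine hideal _ _ hxy (fun i => ?_)
    rw [rect_part]
    split_ifs with hi
    · exact le_trans hl (l.antitone (by omega))
    · exact Nat.zero_le _
end

section
/- Let λ and μ be partitions and let i and j be positive integers such that λ_i > μ_i, λ_i > λ_{i+1}, μ_j > λ_j, and μ_j > μ_{j+1}. Let λ̄ be the partition obtained from λ by diminishing its i-th part by 1, and let μ̄ be the partition obtained from μ by diminishing its j-th part by 1. Then every partition ν such that λ̄ ⊆ ν and there exists a Littlewood–Richardson tableau of shape ν/λ̄ and type μ̄ satisfies λ ⊆ ν or μ ⊆ ν. -/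
/-- The cell in row `i`, column `j` (0-indexed) belongs to the skew diagram `ν/λ`. -/
def InSkew (l n : Partition') (i j : ℕ) : Prop := l.part i ≤ j ∧ j < n.part i

/-- `T` is a Littlewood–Richardson tableau of shape `ν/λ` and type `μ`:
its entries (on the cells of `ν/λ`) are positive integers, weakly increasing
along rows and strictly increasing down columns; for each `k ≥ 0` the entry
`k+1` occurs exactly `μ_{k+1}` times; and its reverse reading word (rows top to
bottom, each row right to left) is a lattice permutation, i.e. in every prefix
(the cells in rows `< r` together with the cells of row `r` in columns `≥ c`)
the entry `k+1` occurs at least as often as the entry `k+2`. -/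
def IsLRTableau (l n m : Partition') (T : ℕ → ℕ → ℕ) : Prop :=
  (∀ i j, InSkew l n i j → 1 ≤ T i j) ∧
  (∀ i j j', InSkew l n i j → InSkew l n i j' → j ≤ j' → T i j ≤ T i j') ∧
  (∀ i i' j, InSkew l n i j → InSkew l n i' j → i < i' → T i j < T i' j) ∧
  (∀ k : ℕ, Set.ncard {p : ℕ × ℕ | InSkew l n p.1 p.2 ∧ T p.1 p.2 = k + 1} = m.part k) ∧
  (∀ r c k : ℕ,
    Set.ncard {p : ℕ × ℕ | InSkew l n p.1 p.2 ∧ (p.1 < r ∨ (p.1 = r ∧ c ≤ p.2)) ∧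
        T p.1 p.2 = k + 2} ≤
    Set.ncard {p : ℕ × ℕ | InSkew l n p.1 p.2 ∧ (p.1 < r ∨ (p.1 = r ∧ c ≤ p.2)) ∧
        T p.1 p.2 = k + 1})

lemma skew_finite (l n : Partition') : {p : ℕ × ℕ | InSkew l n p.1 p.2}.Finite := by
  obtain ⟨N, hN⟩ := n.eventually_zero
  apply Set.Finite.subset ((Set.finite_Iio N).prod (Set.finite_Iio (n.part 0)))
  rintro ⟨r, c⟩ ⟨h1, h2⟩
  have h2' : c < n.part r := h2
  simp only [Set.mem_prod, Set.mem_Iio]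
  constructor
  · by_contra h
    push_neg at h
    have := hN r h
    omega
  · exact lt_of_lt_of_le h2' (n.antitone (Nat.zero_le r))

lemma step_lemma {l n m : Partition'} {T : ℕ → ℕ → ℕ} (hT : IsLRTableau l n m T)
    (v a : ℕ)
    (h : ∀ r c, InSkew l n r c → T r c = v + 1 → a ≤ r) :
    ∀ r c, InSkew l n r c → T r c = v + 2 → a + 1 ≤ r := by
  intro r c hin hval
  by_contra hlt
  push_neg at hlt
  obtain ⟨hpos, hrow, hcol, hcount, hlat⟩ := hT
  have h5 := hlat r c v
  have hempty : {p : ℕ × ℕ | InSkew l n p.1 p.2 ∧ (p.1 < r ∨ (p.1 = r ∧ c ≤ p.2)) ∧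
      T p.1 p.2 = v + 1} = (∅ : Set (ℕ × ℕ)) := by
    ext ⟨r', c'⟩
    simp only [Set.mem_setOf_eq, Set.mem_empty_iff_false, iff_false]
    rintro ⟨hin', hlt' | ⟨rfl, hc⟩, hval'⟩
    · have := h r' c' hin' hval'
      omega
    · have := hrow r' c c' hin hin' hc
      omega
  rw [hempty, Set.ncard_empty] at h5
  have hmem : (r, c) ∈ {p : ℕ × ℕ | InSkew l n p.1 p.2 ∧ (p.1 < r ∨ (p.1 = r ∧ c ≤ p.2)) ∧
      T p.1 p.2 = v + 2} := ⟨hin, Or.inr ⟨rfl, le_refl c⟩, hval⟩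
  have hfin : {p : ℕ × ℕ | InSkew l n p.1 p.2 ∧ (p.1 < r ∨ (p.1 = r ∧ c ≤ p.2)) ∧
      T p.1 p.2 = v + 2}.Finite := (skew_finite l n).subset (fun p hp => hp.1)
  have hpos' := (Set.ncard_pos hfin).mpr ⟨(r, c), hmem⟩
  omega

lemma rows_ge {l n m : Partition'} {T : ℕ → ℕ → ℕ} (hT : IsLRTableau l n m T) :
    ∀ v r c, InSkew l n r c → T r c = v + 1 → v ≤ r := by
  intro v
  induction v with
  | zero => exact fun r c _ _ => Nat.zero_le r
  | succ w ih => exact fun r c hin hval => step_lemma hT w w ih r c hin hval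

lemma rows_ge' {l n m : Partition'} {T : ℕ → ℕ → ℕ} (hT : IsLRTableau l n m T) (i : ℕ)
    (hi : ∀ c, ¬ InSkew l n i c) :
    ∀ d r c, InSkew l n r c → T r c = (i + d) + 1 → i + d + 1 ≤ r := by
  intro d
  induction d with
  | zero =>
    intro r c hin hval
    have h1 := rows_ge hT i r c hin (by omega)
    have h2 : r ≠ i := fun h => hi c (h ▸ hin)
    omega
  | succ e ih =>
    intro r c hin hval
    have := step_lemma hT (i + e) (i + e + 1) ih r c hin (by omega)
    omega

lemma cols_injOn {l n m : Partition'} {T : ℕ → ℕ → ℕ} (hT : IsLRTableau l n m T) (v : ℕ) :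
    Set.InjOn (fun p : ℕ × ℕ => p.2)
      {p : ℕ × ℕ | InSkew l n p.1 p.2 ∧ T p.1 p.2 = v + 1} := by
  rintro ⟨r, c⟩ ⟨hin, hval⟩ ⟨r', c'⟩ ⟨hin', hval'⟩ hcc
  dsimp only at hcc
  subst hcc
  have hv1 : T r c = v + 1 := hval
  have hv2 : T r' c = v + 1 := hval'
  rcases Nat.lt_trichotomy r r' with h | h | h
  · have := hT.2.2.1 r r' c hin hin' h
    omega
  · rw [h]
  · have := hT.2.2.1 r' r c hin' hin h
    omega

lemma count_le {l n m : Partition'} {T : ℕ → ℕ → ℕ} (hT : IsLRTableau l n m T) (v a : ℕ)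
    (h : ∀ r c, InSkew l n r c → T r c = v + 1 → a ≤ r) :
    m.part v ≤ n.part a := by
  rw [← hT.2.2.2.1 v]
  have := Set.ncard_le_ncard_of_injOn (t := ↑(Finset.range (n.part a)))
    (fun p : ℕ × ℕ => p.2)
    (fun p hp => by
      simp only [Finset.coe_range, Set.mem_Iio]
      exact lt_of_lt_of_le hp.1.2 (n.antitone (h p.1 p.2 hp.1 hp.2)))
    (cols_injOn hT v) ((Finset.range (n.part a)).finite_toSet)
  rwa [Set.ncard_coe_finset, Finset.card_range] at this

lemma col_filled {l n m : Partition'} {T : ℕ → ℕ → ℕ} (hT : IsLRTableau l n m T) (v : ℕ)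
    (heq : m.part v = n.part v) (c0 : ℕ) (hc0 : c0 < n.part v) :
    ∃ r, InSkew l n r c0 ∧ T r c0 = v + 1 := by
  have hsub : (fun p : ℕ × ℕ => p.2) '' {p : ℕ × ℕ | InSkew l n p.1 p.2 ∧ T p.1 p.2 = v + 1}
      ⊆ ↑(Finset.range (n.part v)) := by
    rintro x ⟨⟨r, c⟩, ⟨hin, hval⟩, rfl⟩
    simp only [Finset.coe_range, Set.mem_Iio]
    exact lt_of_lt_of_le hin.2 (n.antitone (rows_ge hT v r c hin hval))
  have himg : ((fun p : ℕ × ℕ => p.2) ''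
      {p : ℕ × ℕ | InSkew l n p.1 p.2 ∧ T p.1 p.2 = v + 1}).ncard = n.part v := by
    rw [Set.ncard_image_of_injOn (cols_injOn hT v), hT.2.2.2.1 v, heq]
  have hEq := Set.eq_of_subset_of_ncard_le hsub
    (by rw [himg, Set.ncard_coe_finset, Finset.card_range])
    ((Finset.range (n.part v)).finite_toSet)
  have hc0' : c0 ∈ (fun p : ℕ × ℕ => p.2) ''
      {p : ℕ × ℕ | InSkew l n p.1 p.2 ∧ T p.1 p.2 = v + 1} := by
    rw [hEq]
    simp [hc0]
  obtain ⟨⟨r, c⟩, ⟨hin, hval⟩, h2⟩ := hc0'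
  dsimp only at h2
  subst h2
  exact ⟨r, hin, hval⟩


/-- If `λ_i > μ_i`, `λ_i > λ_{i+1}`, `μ_j > λ_j`, `μ_j > μ_{j+1}`, and `λ̄`, `μ̄`
are obtained from `λ`, `μ` by diminishing the `i`-th part of `λ` and the `j`-th
part of `μ` by `1`, then every partition `ν` with `λ̄ ⊆ ν` admitting a
Littlewood–Richardson tableau of shape `ν/λ̄` and type `μ̄` satisfies
`λ ⊆ ν` or `μ ⊆ ν`. (Indices are 0-based.) -/
theorem lr_diminish (l m lBar mBar : Partition') (i j : ℕ)
    (h1 : m.part i < l.part i) (h2 : l.part (i + 1) < l.part i)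
    (h3 : l.part j < m.part j) (h4 : m.part (j + 1) < m.part j)
    (hlBar : ∀ k, lBar.part k = if k = i then l.part i - 1 else l.part k)
    (hmBar : ∀ k, mBar.part k = if k = j then m.part j - 1 else m.part k) :
    ∀ n : Partition', (∀ k, lBar.part k ≤ n.part k) →
      (∃ T : ℕ → ℕ → ℕ, IsLRTableau lBar n mBar T) →
      (∀ k, l.part k ≤ n.part k) ∨ (∀ k, m.part k ≤ n.part k) := by
  intro n hsub hex
  obtain ⟨T, hT⟩ := hex
  by_contra hcon
  push_neg at hcon
  obtain ⟨⟨kl, hkl⟩, km, hkm⟩ := hcon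
  -- the failure index for l must be i
  have hlb := hsub kl
  rw [hlBar kl] at hlb
  have hkli : kl = i := by
    by_contra h
    rw [if_neg h] at hlb
    omega
  rw [hkli] at hkl hlb
  rw [if_pos rfl] at hlb
  -- μ̄ ⊆ ν
  have hmub : ∀ k, mBar.part k ≤ n.part k := fun k => count_le hT k k (rows_ge hT k)
  have hkmj : km = j := by
    by_contra h
    have h' := hmub km
    rw [hmBar km, if_neg h] at h'
    omega
  rw [hkmj] at hkm
  have hmjb := hmub j
  rw [hmBar j, if_pos rfl] at hmjb
  -- row i of the skew shape is empty
  have hrowi : ∀ c, ¬ InSkew lBar n i c := by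
    rintro c ⟨ha, hb⟩
    rw [hlBar i, if_pos rfl] at ha
    omega
  have hij : i ≠ j := by
    intro h
    rw [h] at h1
    omega
  rcases Nat.lt_or_ge i j with hij' | hij'
  · -- case i < j : all entries of value j occur in rows ≥ j, too few columns
    obtain ⟨j', rfl⟩ : ∃ j', j = j' + 1 := ⟨j - 1, by omega⟩
    have hshift : ∀ r c, InSkew lBar n r c → T r c = j' + 1 → j' + 1 ≤ r := by
      intro r c hin hval
      have := rows_ge' hT i hrowi (j' - i) r c hin (by omega)
      omega
    have hcle := count_le hT j' (j' + 1) hshift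
    rw [hmBar j', if_neg (by omega)] at hcle
    have hmono : m.part (j' + 1) ≤ m.part j' := m.antitone (by omega)
    omega
  · -- case j < i : column (l.part i - 1) is empty but must contain a value j+1
    have hji : j < i := by omega
    have heq : mBar.part j = n.part j := by
      rw [hmBar j, if_pos rfl]
      omega
    have hc0 : l.part i - 1 < n.part j := by
      have h1' := hsub j
      rw [hlBar j, if_neg (by omega)] at h1'
      have := l.antitone (le_of_lt hji)
      omega
    obtain ⟨r, hin, hval⟩ := col_filled hT j heq (l.part i - 1) hc0
    rcases Nat.lt_trichotomy r i with hri | hri | hri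
    · have h1' := hin.1
      rw [hlBar r, if_neg (by omega)] at h1'
      have := l.antitone (le_of_lt hri)
      omega
    · exact hrowi _ (hri ▸ hin)
    · have h2' := hin.2
      have := n.antitone (le_of_lt hri)
      omega
end

section
/- Let λ and μ be partitions and let x be a positive integer. Let ν be the partition obtained by sorting the sequence (λ_1+μ_1, ..., λ_x+μ_x, λ_{x+1}, μ_{x+1}, λ_{x+2}, μ_{x+2}, ...) into weakly decreasing order. Then λ ⊆ ν and there exists a Littlewood–Richardson tableau of shape ν/λ and type μ. -/
/-!
Conjugation turns the union of multisets of parts into the sum of conjugates, so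
`ν'_c = min(x, (λ+μ)'_c) + (λ'_c - x) + (μ'_c - x)` (truncated subtraction). Hence the rows
`k < x` of `ν` are `λ_k + μ_k`, and in the rows `≥ x` the cells of `ν/λ` in column `c` form a
segment of length `μ'_c - x` starting in row `max(x, λ'_c)`. Fill row `k < x` with `k + 1` and
each of those segments with `x + 1, x + 2, …` from the top. The cells containing `k + 1` are
indexed by `t < μ_k` (by the offset from `λ_k` in the rows `< x`, by the column in the rows
`≥ x`), and the cell of index `t` containing `k + 2` lies in a strictly lower row than the one
containing `k + 1`; this gives the lattice property.
-/

namespace Partition'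

instance : Add Partition' where
  add p q :=
    { part := fun i => p.part i + q.part i
      antitone := fun _ _ h => Nat.add_le_add (p.antitone h) (q.antitone h)
      eventually_zero := by
        obtain ⟨N, hN⟩ := p.eventually_zero
        obtain ⟨M, hM⟩ := q.eventually_zero
        exact ⟨max N M, fun i hi => by
          rw [hN i (le_of_max_le_left hi), hM i (le_of_max_le_right hi)]⟩ }

@[simp]
theorem add_part (p q : Partition') (i : ℕ) : (p + q).part i = p.part i + q.part i := rfl

noncomputable def conj (p : Partition') (c : ℕ) : ℕ := {t | c < p.part t}.ncard

theorem setOf_lt_part_eq_Iio (p : Partition') (c : ℕ) :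
    {t | c < p.part t} = Set.Iio (p.conj c) := by
  obtain ⟨N, hN⟩ := p.eventually_zero
  have hex : ∃ t, p.part t ≤ c := ⟨N, by simp [hN N le_rfl]⟩
  have h : {t | c < p.part t} = Set.Iio (Nat.find hex) := by
    ext t
    simp only [Set.mem_ofPred_eq, Set.mem_Iio, Nat.lt_find_iff, not_le]
    exact ⟨fun ht s hs => ht.trans_le (p.antitone hs), fun h => h t le_rfl⟩
  rw [conj, h, Set.ncard_Iio_nat]

theorem lt_part_iff_lt_conj (p : Partition') {c i : ℕ} : c < p.part i ↔ i < p.conj c :=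
  Set.ext_iff.mp (p.setOf_lt_part_eq_Iio c) i

theorem conj_antitone (p : Partition') : Antitone p.conj := fun c d hcd => by
  rw [← Set.Iio_subset_Iio_iff, ← setOf_lt_part_eq_Iio, ← setOf_lt_part_eq_Iio]
  exact fun t ht => hcd.trans_lt ht

theorem conj_mono {p q : Partition'} (h : ∀ i, p.part i ≤ q.part i) (c : ℕ) :
    p.conj c ≤ q.conj c := by
  rw [← Set.Iio_subset_Iio_iff, ← setOf_lt_part_eq_Iio, ← setOf_lt_part_eq_Iio]
  exact fun t ht => ht.trans_le (h t)

theorem conj_le_conj_add_right (p q : Partition') (c : ℕ) : p.conj c ≤ (p + q).conj c :=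
  conj_mono (fun _ => Nat.le_add_right _ _) c

theorem conj_le_conj_add_left (p q : Partition') (c : ℕ) : q.conj c ≤ (p + q).conj c :=
  conj_mono (fun _ => Nat.le_add_left _ _) c

theorem part_le_part_of_conj_le {p q : Partition'} (h : ∀ c, p.conj c ≤ q.conj c) (i : ℕ) :
    p.part i ≤ q.part i := by
  by_contra! hi
  exact lt_irrefl _ (q.lt_part_iff_lt_conj.mpr ((p.lt_part_iff_lt_conj.mp hi).trans_le (h _)))

theorem conj_eq_ncard_of_perm {p : Partition'} {f : ℕ → ℕ} (τ : Equiv.Perm ℕ)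
    (h : ∀ i, p.part i = f (τ i)) (c : ℕ) : p.conj c = {q | c < f q}.ncard := by
  have hpre : {i | c < p.part i} = τ ⁻¹' {q | c < f q} := by
    ext i
    simp [h]
  rw [conj, hpre, Set.ncard_preimage_of_injective_subset_range τ.injective (by simp)]

end Partition'

open Partition'

theorem inSkew_iff_conj {l n : Partition'} {i j : ℕ} :
    InSkew l n i j ↔ l.conj j ≤ i ∧ i < n.conj j := by
  rw [InSkew, ← not_lt, l.lt_part_iff_lt_conj, n.lt_part_iff_lt_conj, not_lt]

theorem isLRTableau_of_cells {l n m : Partition'} {T : ℕ → ℕ → ℕ}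
    (hpos : ∀ i j, InSkew l n i j → 1 ≤ T i j)
    (hrow : ∀ i j j', InSkew l n i j → InSkew l n i j' → j ≤ j' → T i j ≤ T i j')
    (hcol : ∀ i i' j, InSkew l n i j → InSkew l n i' j → i < i' → T i j < T i' j)
    (e : ℕ → ℕ → ℕ × ℕ)
    (he : ∀ k, {p : ℕ × ℕ | InSkew l n p.1 p.2 ∧ T p.1 p.2 = k + 1} = e k '' Set.Iio (m.part k))
    (he_inj : ∀ k, Set.InjOn (e k) (Set.Iio (m.part k)))
    (he_row : ∀ k t, t < m.part (k + 1) → (e k t).1 < (e (k + 1) t).1) :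
    IsLRTableau l n m T := by
  refine ⟨hpos, hrow, hcol, fun k => ?_, fun r c k => ?_⟩
  · rw [he, (he_inj k).ncard_image, Set.ncard_Iio_nat]
  · set P : Set (ℕ × ℕ) := {p | p.1 < r ∨ (p.1 = r ∧ c ≤ p.2)}
    have hprefix : ∀ k, {p : ℕ × ℕ | InSkew l n p.1 p.2 ∧ (p.1 < r ∨ (p.1 = r ∧ c ≤ p.2)) ∧
        T p.1 p.2 = k + 1} = e k '' (Set.Iio (m.part k) ∩ e k ⁻¹' P) := by
      intro k
      rw [Set.image_inter_preimage, ← he]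
      ext p
      simp only [Set.mem_ofPred_eq, Set.mem_inter_iff, P]
      tauto
    rw [show k + 2 = k + 1 + 1 from rfl, hprefix, hprefix,
      ((he_inj _).mono Set.inter_subset_left).ncard_image,
      ((he_inj _).mono Set.inter_subset_left).ncard_image]
    refine Set.ncard_le_ncard (fun t ⟨ht, htP⟩ => ⟨?_, ?_⟩) ((Set.finite_Iio _).inter_of_left _)
    · exact (Set.mem_Iio.mp ht).trans_le (m.antitone k.le_succ)
    · have := he_row k t ht
      simp only [Set.mem_preimage, Set.mem_ofPred_eq, P] at htP ⊢
      omega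

def mixedSeq (l m : Partition') (x p : ℕ) : ℕ :=
  if p < x then l.part p + m.part p
  else if (p - x) % 2 = 0 then l.part (x + (p - x) / 2)
  else m.part (x + (p - x) / 2)

theorem setOf_lt_mixedSeq (l m : Partition') (x c : ℕ) :
    {p | c < mixedSeq l m x p} =
      Set.Iio (min x ((l + m).conj c)) ∪ (fun s => x + 2 * s) '' Set.Iio (l.conj c - x) ∪
        (fun s => x + 2 * s + 1) '' Set.Iio (m.conj c - x) := by
  ext p
  have hevens : ∀ a, p ∈ (fun s => x + 2 * s) '' Set.Iio a ↔
      x ≤ p ∧ (p - x) % 2 = 0 ∧ (p - x) / 2 < a := fun a => by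
    simp only [Set.mem_image, Set.mem_Iio]
    exact ⟨by omega, fun h => ⟨(p - x) / 2, by omega⟩⟩
  have hodds : ∀ a, p ∈ (fun s => x + 2 * s + 1) '' Set.Iio a ↔
      x ≤ p ∧ (p - x) % 2 = 1 ∧ (p - x) / 2 < a := fun a => by
    simp only [Set.mem_image, Set.mem_Iio]
    exact ⟨by omega, fun h => ⟨(p - x) / 2, by omega⟩⟩
  simp only [Set.mem_ofPred_eq, Set.mem_union, hevens, hodds, Set.mem_Iio, mixedSeq]
  split_ifs <;> simp only [← add_part, lt_part_iff_lt_conj] <;> omega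

noncomputable def mixedConj (l m : Partition') (x c : ℕ) : ℕ :=
  min x ((l + m).conj c) + (l.conj c - x) + (m.conj c - x)

theorem ncard_setOf_lt_mixedSeq (l m : Partition') (x c : ℕ) :
    {p | c < mixedSeq l m x p}.ncard = mixedConj l m x c := by
  have hinj_evens : Function.Injective fun s => x + 2 * s := fun a b h => by simp at h; omega
  have hinj_odds : Function.Injective fun s => x + 2 * s + 1 := fun a b h => by simp at h; omega
  rw [mixedConj, setOf_lt_mixedSeq, Set.ncard_union_eq, Set.ncard_union_eq, Set.ncard_Iio_nat,
    Set.ncard_image_of_injective _ hinj_evens, Set.ncard_image_of_injective _ hinj_odds,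
    Set.ncard_Iio_nat, Set.ncard_Iio_nat]
  all_goals
    refine Set.disjoint_left.mpr fun p hp hp' => ?_
    simp only [Set.mem_union, Set.mem_image, Set.mem_Iio] at hp hp'
    omega

section MixedTableau

variable {l m n : Partition'} {x : ℕ}

theorem conj_le_conj_of_eq_mixedConj (hν : n.conj = mixedConj l m x) (c : ℕ) :
    l.conj c ≤ n.conj c := by
  have := conj_le_conj_add_right l m c
  rw [hν, mixedConj]
  omega

theorem part_eq_add_of_lt (hν : n.conj = mixedConj l m x) {k : ℕ} (hk : k < x) :
    n.part k = l.part k + m.part k := by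
  refine eq_of_forall_lt_iff fun c => ?_
  have hl := conj_le_conj_add_right l m c
  have hm := conj_le_conj_add_left l m c
  rw [n.lt_part_iff_lt_conj, ← add_part, (l + m).lt_part_iff_lt_conj, hν, mixedConj]
  omega

theorem lt_conj_iff_of_le (hν : n.conj = mixedConj l m x) {k : ℕ}
    (hk : x ≤ k) (j : ℕ) : k + (l.conj j - x) < n.conj j ↔ k < m.conj j := by
  have := conj_le_conj_add_left l m j
  rw [hν, mixedConj]
  omega

noncomputable def mixedTableau (l : Partition') (x i j : ℕ) : ℕ := i + 1 - (l.conj j - x)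

noncomputable def mixedCell (l : Partition') (x k t : ℕ) : ℕ × ℕ :=
  if k < x then (k, l.part k + t) else (k + (l.conj t - x), t)

theorem setOf_mixedTableau_eq_image (hν : n.conj = mixedConj l m x) (k : ℕ) :
    {p : ℕ × ℕ | InSkew l n p.1 p.2 ∧ mixedTableau l x p.1 p.2 = k + 1} =
      mixedCell l x k '' Set.Iio (m.part k) := by
  ext ⟨i, j⟩
  simp only [Set.mem_ofPred_eq, inSkew_iff_conj, mixedTableau, mixedCell, Set.mem_image,
    Set.mem_Iio]
  split_ifs with hk
  · have hrow : ∀ j, l.conj j ≤ k ∧ k < n.conj j ↔ l.part k ≤ j ∧ j < l.part k + m.part k :=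
      fun j => by rw [← inSkew_iff_conj, InSkew, part_eq_add_of_lt hν hk]
    constructor
    · rintro ⟨hij, hT⟩
      obtain rfl : k = i := by omega
      have := (hrow j).mp hij
      exact ⟨j - l.part k, by omega, Prod.ext rfl (by omega)⟩
    · rintro ⟨t, ht, hkt⟩
      obtain ⟨rfl, rfl⟩ := Prod.mk.inj hkt
      have := (hrow (l.part k + t)).mpr ⟨Nat.le_add_right _ _, by omega⟩
      exact ⟨this, by omega⟩
  · constructor
    · rintro ⟨⟨hLi, hin⟩, hT⟩
      obtain rfl : i = k + (l.conj j - x) := by omega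
      exact ⟨j, m.lt_part_iff_lt_conj.mpr ((lt_conj_iff_of_le hν (not_lt.mp hk) j).mp hin), rfl⟩
    · rintro ⟨t, ht, hkt⟩
      obtain ⟨rfl, rfl⟩ := Prod.mk.inj hkt
      exact ⟨⟨by omega, (lt_conj_iff_of_le hν (not_lt.mp hk) t).mpr
        (m.lt_part_iff_lt_conj.mp ht)⟩, by omega⟩

theorem isLRTableau_mixedTableau (hν : n.conj = mixedConj l m x) :
    IsLRTableau l n m (mixedTableau l x) := by
  refine isLRTableau_of_cells ?_ ?_ ?_ (mixedCell l x) (setOf_mixedTableau_eq_image hν) ?_ ?_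
  · intro i j hij
    have := inSkew_iff_conj.mp hij
    simp only [mixedTableau]
    omega
  · intro i j j' hij _ hjj'
    have := inSkew_iff_conj.mp hij
    have := l.conj_antitone hjj'
    simp only [mixedTableau]
    omega
  · intro i i' j hij _ hii'
    have := inSkew_iff_conj.mp hij
    simp only [mixedTableau]
    omega
  · intro k s _ t _ hst
    simp only [mixedCell] at hst
    split_ifs at hst <;> simp only [Prod.mk.injEq] at hst <;> omega
  · intro k t _
    simp only [mixedCell]
    split_ifs <;> omega

end MixedTableau

theorem lr_mixed_sort_general (l m n : Partition') (x : ℕ)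
    (hn : ∃ τ : Equiv.Perm ℕ, ∀ i,
      n.part i =
        if τ i < x then l.part (τ i) + m.part (τ i)
        else if (τ i - x) % 2 = 0 then l.part (x + (τ i - x) / 2)
        else m.part (x + (τ i - x) / 2)) :
    (∀ i, l.part i ≤ n.part i) ∧ ∃ T : ℕ → ℕ → ℕ, IsLRTableau l n m T := by
  obtain ⟨τ, hτ⟩ := hn
  have hν : n.conj = mixedConj l m x := funext fun c => by
    rw [conj_eq_ncard_of_perm (f := mixedSeq l m x) τ hτ, ncard_setOf_lt_mixedSeq]
  exact ⟨part_le_part_of_conj_le (conj_le_conj_of_eq_mixedConj hν), _, isLRTableau_mixedTableau hν⟩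

/-- Let `x ≥ 1` and let `ν` be the weakly decreasing rearrangement of the
sequence `(λ_1+μ_1, …, λ_x+μ_x, λ_{x+1}, μ_{x+1}, λ_{x+2}, μ_{x+2}, …)`.
Then `λ ⊆ ν` and there is a Littlewood–Richardson tableau of shape `ν/λ` and
type `μ`.  (0-indexed: position `k < x` of the unsorted sequence is
`λ_k + μ_k`, and positions `x + 2s`, `x + 2s + 1` are `λ_{x+s}`, `μ_{x+s}`.) -/
theorem lr_mixed_sort (l m n : Partition') (x : ℕ) (hx : 1 ≤ x)
    (hn : ∃ τ : Equiv.Perm ℕ, ∀ i,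
      n.part i =
        if τ i < x then l.part (τ i) + m.part (τ i)
        else if (τ i - x) % 2 = 0 then l.part (x + (τ i - x) / 2)
        else m.part (x + (τ i - x) / 2)) :
    (∀ i, l.part i ≤ n.part i) ∧ ∃ T : ℕ → ℕ → ℕ, IsLRTableau l n m T :=
  lr_mixed_sort_general l m n x hn
end

section
/- A partition ideal is monomial prime if and only if it is Schur prime. -/
/-- `ν` is a Schur constituent of `s_λ · s_μ`: `λ ⊆ ν` and there is a
Littlewood–Richardson tableau of shape `ν/λ` and type `μ`. -/
def IsSchurConstituent (l m n : Partition') : Prop :=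
  (∀ i, l.part i ≤ n.part i) ∧ ∃ T : ℕ → ℕ → ℕ, IsLRTableau l n m T

/-- A set of partitions is Schur prime if it is not everything and whenever
every Schur constituent of `s_λ · s_μ` lies in it, `λ` or `μ` lies in it. -/
def IsSchurPrime (I : Set Partition') : Prop :=
  I ≠ Set.univ ∧ ∀ l m : Partition',
    (∀ n : Partition', IsSchurConstituent l m n → n ∈ I) → l ∈ I ∨ m ∈ I

namespace PP

/-- the zero partition -/
def pzero : Partition' := ⟨fun _ => 0, fun _ _ _ => le_rfl, ⟨0, fun _ _ => rfl⟩⟩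

/-- pointwise sum -/
def padd (l m : Partition') : Partition' where
  part i := l.part i + m.part i
  antitone i j h := Nat.add_le_add (l.antitone h) (m.antitone h)
  eventually_zero := by
    obtain ⟨N, hN⟩ := l.eventually_zero
    obtain ⟨M, hM⟩ := m.eventually_zero
    exact ⟨max N M, fun i hi => by
      simp [hN i (le_trans (le_max_left _ _) hi), hM i (le_trans (le_max_right _ _) hi)]⟩

/-- pointwise max -/
def pjoin (l m : Partition') : Partition' where
  part i := max (l.part i) (m.part i)
  antitone i j h := max_le_max (l.antitone h) (m.antitone h)
  eventually_zero := by
    obtain ⟨N, hN⟩ := l.eventually_zero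
    obtain ⟨M, hM⟩ := m.eventually_zero
    exact ⟨max N M, fun i hi => by
      simp [hN i (le_trans (le_max_left _ _) hi), hM i (le_trans (le_max_right _ _) hi)]⟩

/-- rectangle with q rows and F columns -/
def rect (q F : ℕ) : Partition' where
  part i := if i < q then F else 0
  antitone i j h := by
    by_cases hj : j < q
    · simp [hj, show i < q from lt_of_le_of_lt h hj]
    · simp [hj]
  eventually_zero := ⟨q, fun i hi => by simp [Nat.not_lt.2 hi]⟩

@[simp] lemma rect_part_lt {q F i : ℕ} (h : i < q) : (rect q F).part i = F := if_pos h

/-- Sorting an eventually-zero sequence: there is a permutation of ℕ fixing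
`[N, ∞)` making the sequence antitone. -/
lemma sort_exists (s : ℕ → ℕ) (N : ℕ) (hs : ∀ i, N ≤ i → s i = 0) :
    ∃ τ : Equiv.Perm ℕ, (∀ ⦃i j : ℕ⦄, i ≤ j → s (τ j) ≤ s (τ i)) ∧
      (∀ i, N ≤ i → τ i = i) := by
  classical
  set f : Fin N → ℕ := fun x => s x.1 with hf
  set g : Equiv.Perm (Fin N) := (Fin.revPerm).trans (Tuple.sort f) with hg
  have hmono : ∀ x y : Fin N, x ≤ y → f (g y) ≤ f (g x) := by
    intro x y hxy
    have := Tuple.monotone_sort f (a := Fin.rev y) (b := Fin.rev x)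
      (by simpa using Fin.rev_le_rev.2 hxy)
    simpa [hg] using this
  refine ⟨⟨fun i => if h : i < N then (g ⟨i, h⟩).1 else i,
          fun i => if h : i < N then (g.symm ⟨i, h⟩).1 else i, ?_, ?_⟩, ?_, ?_⟩
  · intro i
    by_cases h : i < N
    · simp [h, (g ⟨i, h⟩).2]
    · simp [h]
  · intro i
    by_cases h : i < N
    · simp [h, (g.symm ⟨i, h⟩).2]
    · simp [h]
  · intro i j hij
    dsimp only [Equiv.coe_fn_mk]
    by_cases hj : j < N
    · have hi : i < N := lt_of_le_of_lt hij hj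
      rw [dif_pos hj, dif_pos hi]
      exact hmono ⟨i, hi⟩ ⟨j, hj⟩ hij
    · rw [dif_neg hj]
      have : s j = 0 := hs j (Nat.not_lt.1 hj)
      rw [this]; exact Nat.zero_le _
  · intro i hi
    simp [Nat.not_lt.2 hi]

end PP
namespace PP

lemma perm_pigeonhole (τ : Equiv.Perm ℕ) (k : ℕ) : ∃ j, k ≤ j ∧ τ j ≤ k := by
  classical
  by_contra h
  push_neg at h
  have hsub : (Finset.range (k + 1)).image (fun y => τ.symm y) ⊆ Finset.range k := by
    intro x hx
    simp only [Finset.mem_image, Finset.mem_range] at hx ⊢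
    obtain ⟨y, hy, rfl⟩ := hx
    by_contra hxk
    exact absurd (h _ (Nat.not_lt.1 hxk)) (by simp [Nat.lt_succ_iff.1 hy])
  have := Finset.card_le_card hsub
  rw [Finset.card_image_of_injective _ τ.symm.injective, Finset.card_range,
    Finset.card_range] at this
  omega

/-- A monomial constituent contains both factors. -/
lemma mono_constituent_contains {l m n : Partition'} (h : IsMonomialConstituent l m n) :
    (∀ i, l.part i ≤ n.part i) ∧ ∀ i, m.part i ≤ n.part i := by
  obtain ⟨σ, τ, hn⟩ := h
  constructor
  · intro i
    obtain ⟨j, hij, hji⟩ := perm_pigeonhole τ i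
    calc l.part i ≤ l.part (τ j) := l.antitone hji
    _ ≤ n.part j := by rw [hn j]; exact Nat.le_add_right _ _
    _ ≤ n.part i := n.antitone hij
  · intro i
    obtain ⟨j, hij, hji⟩ := perm_pigeonhole (τ.trans σ) i
    calc m.part i ≤ m.part (σ (τ j)) := m.antitone hji
    _ ≤ n.part j := by rw [hn j]; exact Nat.le_add_left _ _
    _ ≤ n.part i := n.antitone hij

/-- If a sorted sequence has its `k`-th entry `> c`, then `k+1` many indices map
under the sorting permutation to values where the raw sequence exceeds `c`. -/
lemma sorted_part_le {s : ℕ → ℕ} {τ : Equiv.Perm ℕ} {k c : ℕ}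
    (hanti : ∀ ⦃i j : ℕ⦄, i ≤ j → s (τ j) ≤ s (τ i))
    (hbig : ∀ i, c < s i → i < k) : s (τ k) ≤ c := by
  classical
  by_contra hc
  push_neg at hc
  have hsub : (Finset.range (k + 1)).image (fun y => τ y) ⊆ Finset.range k := by
    intro x hx
    simp only [Finset.mem_image, Finset.mem_range] at hx ⊢
    obtain ⟨y, hy, rfl⟩ := hx
    exact hbig _ (lt_of_lt_of_le hc (hanti (Nat.lt_succ_iff.1 hy)))
  have := Finset.card_le_card hsub
  rw [Finset.card_image_of_injective _ τ.injective, Finset.card_range,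
    Finset.card_range] at this
  omega

/-- Key monomial lemma: there is always a monomial constituent whose `k`-th part
is at most `max (l.part k) (m.part k)`. -/
lemma monKey (l m : Partition') (k : ℕ) :
    ∃ n : Partition', IsMonomialConstituent l m n ∧
      n.part k ≤ max (l.part k) (m.part k) := by
  classical
  obtain ⟨zl, hzl⟩ := l.eventually_zero
  obtain ⟨zm, hzm⟩ := m.eventually_zero
  set N : ℕ := max (max zl zm) k with hN
  have hNk : k ≤ N := le_max_right _ _
  have hNzl : zl ≤ N := le_trans (le_max_left _ _) (le_max_left _ _)
  have hNzm : zm ≤ N := le_trans (le_max_right _ _) (le_max_left _ _)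
  set d : ℕ := N - k with hd
  set σf : ℕ → ℕ := fun i =>
    if k ≤ i ∧ i < N then i + d else if N ≤ i ∧ i < 2 * N - k then i - d else i with hσf
  have hinv : Function.Involutive σf := by
    intro i
    simp only [hσf]
    split_ifs <;> omega
  set σ : Equiv.Perm ℕ := hinv.toPerm with hσ
  set s : ℕ → ℕ := fun i => l.part i + m.part (σ i) with hs
  have hσval : ∀ i, σ i = σf i := fun i => rfl
  have hzero : ∀ i, 2 * N ≤ i → s i = 0 := by
    intro i hi
    have h1 : σ i = i := by rw [hσval]; simp only [hσf]; split_ifs <;> omega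
    simp only [hs, h1]
    rw [hzl i (by omega), hzm i (by omega)]
  have hbig : ∀ i, max (l.part k) (m.part k) < s i → i < k := by
    intro i hi
    by_contra hik
    push_neg at hik
    have : s i ≤ max (l.part k) (m.part k) := by
      rcases lt_or_ge i N with h2 | h2
      · -- k ≤ i < N : σ i = i + d ≥ N
        have h3 : σ i = i + d := by rw [hσval]; simp only [hσf]; rw [if_pos ⟨hik, h2⟩]
        have h4 : m.part (σ i) = 0 := by rw [h3]; exact hzm _ (by omega)
        simp only [hs, h4, Nat.add_zero]
        exact le_max_of_le_left (l.antitone hik)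
      · rcases lt_or_ge i (2 * N - k) with h5 | h5
        · have h3 : σ i = i - d := by
            rw [hσval]; simp only [hσf]; rw [if_neg (by omega), if_pos ⟨h2, h5⟩]
          have h4 : l.part i = 0 := hzl i (by omega)
          simp only [hs, h4, h3, Nat.zero_add]
          exact le_max_of_le_right (m.antitone (by omega))
        · have h3 : σ i = i := by
            rw [hσval]; simp only [hσf]; rw [if_neg (by omega), if_neg (by omega)]
          simp only [hs, h3]
          rw [hzl i (by omega), hzm i (by omega)]
          exact Nat.zero_le _
    omega
  obtain ⟨τ, hτ1, hτ2⟩ := sort_exists s (2 * N) hzero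
  refine ⟨⟨fun i => s (τ i), fun i j hij => hτ1 hij, ⟨2 * N, fun i hi => by
      show s (τ i) = 0; rw [hτ2 i hi]; exact hzero i hi⟩⟩, ⟨σ, τ, fun i => rfl⟩, ?_⟩
  exact sorted_part_le hτ1 hbig

end PP
namespace PP

lemma ncard_Iio (n : ℕ) : (Set.Iio n).ncard = n := by
  rw [← Finset.coe_Iio, Set.ncard_coe_finset]
  exact Nat.card_Iio n

lemma skew_finite (l n : Partition') : {p : ℕ × ℕ | InSkew l n p.1 p.2}.Finite := by
  obtain ⟨N, hN⟩ := n.eventually_zero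
  apply Set.Finite.subset ((Set.finite_Iio N).prod (Set.finite_Iio (n.part 0)))
  rintro ⟨i, j⟩ ⟨h1, h2⟩
  constructor
  · simp only [Set.mem_Iio]
    by_contra hi
    rw [hN i (Nat.not_lt.1 hi)] at h2
    omega
  · exact lt_of_lt_of_le h2 (n.antitone (Nat.zero_le _))

lemma lr_rowBound {l n m : Partition'} {T : ℕ → ℕ → ℕ} (hT : IsLRTableau l n m T) :
    ∀ i j, InSkew l n i j → T i j ≤ i + 1 := by
  obtain ⟨h1, h2, h3, h4, h5⟩ := hT
  intro i
  induction i using Nat.strong_induction_on with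
  | _ i IH =>
    intro j hij
    by_contra hw
    push_neg at hw
    have hw2 : 2 ≤ T i j := by have := h1 i j hij; omega
    have hfinA : {p : ℕ × ℕ | InSkew l n p.1 p.2 ∧ (p.1 < i ∨ (p.1 = i ∧ j ≤ p.2)) ∧
        T p.1 p.2 = (T i j - 2) + 2}.Finite :=
      (skew_finite l n).subset (fun p hp => hp.1)
    have hA : 1 ≤ Set.ncard {p : ℕ × ℕ | InSkew l n p.1 p.2 ∧
        (p.1 < i ∨ (p.1 = i ∧ j ≤ p.2)) ∧ T p.1 p.2 = (T i j - 2) + 2} := by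
      rw [Nat.one_le_iff_ne_zero, ← Nat.pos_iff_ne_zero, Set.ncard_pos hfinA]
      refine ⟨(i, j), hij, Or.inr ⟨rfl, le_rfl⟩, ?_⟩
      show T i j = _
      omega
    have hle := h5 i j (T i j - 2)
    have hB : 1 ≤ Set.ncard {p : ℕ × ℕ | InSkew l n p.1 p.2 ∧
        (p.1 < i ∨ (p.1 = i ∧ j ≤ p.2)) ∧ T p.1 p.2 = (T i j - 2) + 1} := le_trans hA hle
    have hfinB : {p : ℕ × ℕ | InSkew l n p.1 p.2 ∧ (p.1 < i ∨ (p.1 = i ∧ j ≤ p.2)) ∧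
        T p.1 p.2 = (T i j - 2) + 1}.Finite :=
      (skew_finite l n).subset (fun p hp => hp.1)
    have hne : {p : ℕ × ℕ | InSkew l n p.1 p.2 ∧ (p.1 < i ∨ (p.1 = i ∧ j ≤ p.2)) ∧
        T p.1 p.2 = (T i j - 2) + 1}.Nonempty := by
      rw [← Set.ncard_pos hfinB]; omega
    obtain ⟨⟨i', j'⟩, hsk', hpre', hval'⟩ := hne
    dsimp only at hsk' hpre' hval'
    rcases hpre' with hlt | ⟨heq, hjle⟩
    · have := IH i' hlt j' hsk'
      omega
    · subst heq
      have := h2 i' j j' hij hsk' hjle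
      omega

/-- The type of an LR tableau is contained in the outer shape. -/
lemma lr_type_le {l n m : Partition'} {T : ℕ → ℕ → ℕ} (hT : IsLRTableau l n m T) :
    ∀ t, m.part t ≤ n.part t := by
  intro t
  obtain ⟨h1, h2, h3, h4, h5⟩ := hT
  rw [← h4 t, ← ncard_Iio (n.part t)]
  apply Set.ncard_le_ncard_of_injOn (fun p => p.2)
  · rintro ⟨i, j⟩ ⟨hsk, hval⟩
    dsimp only at hsk hval ⊢
    have hrb := lr_rowBound ⟨h1, h2, h3, h4, h5⟩ i j hsk
    have ht : t ≤ i := by omega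
    exact Set.mem_Iio.2 (lt_of_lt_of_le hsk.2 (n.antitone ht))
  · rintro ⟨i, j⟩ ⟨hsk, hval⟩ ⟨i', j'⟩ ⟨hsk', hval'⟩ hj
    dsimp only at hsk hval hsk' hval' hj
    subst hj
    have hii : i = i' := by
      rcases Nat.lt_trichotomy i i' with h | h | h
      · have := h3 i i' j hsk hsk' h; omega
      · exact h
      · have := h3 i' i j hsk' hsk h; omega
    rw [hii]

/-- A Schur constituent contains both factors. -/
lemma schur_constituent_contains {l m n : Partition'} (h : IsSchurConstituent l m n) :
    (∀ i, l.part i ≤ n.part i) ∧ ∀ i, m.part i ≤ n.part i := by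
  obtain ⟨hl, T, hT⟩ := h
  exact ⟨hl, lr_type_le hT⟩

end PP
namespace PP

lemma ncard_Ico (a b : ℕ) : (Set.Ico a b).ncard = b - a := by
  rw [← Finset.coe_Ico, Set.ncard_coe_finset, Nat.card_Ico]

/-- conjugate of a weakly decreasing eventually-zero sequence -/
noncomputable def conj (h : ℕ → ℕ) (x : ℕ) : ℕ := sInf {y | h y ≤ x}

section conj

variable {h : ℕ → ℕ} (hanti : ∀ ⦃i j : ℕ⦄, i ≤ j → h j ≤ h i)
  (hz : ∃ N, ∀ i, N ≤ i → h i = 0)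

include hanti hz

lemma conj_le_iff {x y : ℕ} : conj h x ≤ y ↔ h y ≤ x := by
  obtain ⟨N, hN⟩ := hz
  have hne : {y | h y ≤ x}.Nonempty := ⟨N, by simp [hN N le_rfl]⟩
  constructor
  · intro hle
    have hmem := Nat.sInf_mem hne
    exact le_trans (hanti hle) hmem
  · intro hyx
    exact Nat.sInf_le hyx

lemma lt_conj_iff {x y : ℕ} : y < conj h x ↔ x < h y := by
  rw [← Nat.not_le, ← Nat.not_le, not_iff_not]
  exact conj_le_iff hanti hz

lemma conj_anti : ∀ ⦃x x' : ℕ⦄, x ≤ x' → conj h x' ≤ conj h x := by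
  intro x x' hxx
  rw [conj_le_iff hanti hz]
  exact le_trans ((conj_le_iff hanti hz).1 le_rfl) hxx

lemma conj_z : ∃ N, ∀ x, N ≤ x → conj h x = 0 :=
  ⟨h 0, fun x hx => Nat.le_zero.1 ((conj_le_iff hanti hz).2 hx)⟩

lemma conj_conj : ∀ x, conj (conj h) x = h x := by
  have key : ∀ x y, conj (conj h) x ≤ y ↔ h x ≤ y := by
    intro x y
    rw [conj_le_iff (conj_anti hanti hz) (conj_z hanti hz)]
    exact conj_le_iff hanti hz
  intro x
  exact le_antisymm ((key x (h x)).2 le_rfl) ((key x _).1 le_rfl)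

end conj

end PP
namespace PP

/-- Key Schur lemma: there is always a Schur constituent whose `k`-th part
is at most `max (l.part k) (m.part k)`. -/
lemma schurKey (l m : Partition') (k : ℕ) :
    ∃ n : Partition', IsSchurConstituent l m n ∧
      n.part k ≤ max (l.part k) (m.part k) := by
  classical
  -- tails of l and m
  set a : ℕ → ℕ := fun i => l.part (k + i) with ha
  set b : ℕ → ℕ := fun i => m.part (k + i) with hb
  have hanti_a : ∀ ⦃i j : ℕ⦄, i ≤ j → a j ≤ a i := fun i j h =>
    l.antitone (Nat.add_le_add_left h k)
  have hanti_b : ∀ ⦃i j : ℕ⦄, i ≤ j → b j ≤ b i := fun i j h =>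
    m.antitone (Nat.add_le_add_left h k)
  have hz_a : ∃ N, ∀ i, N ≤ i → a i = 0 := by
    obtain ⟨N, hN⟩ := l.eventually_zero
    exact ⟨N, fun i hi => hN _ (by omega)⟩
  have hz_b : ∃ N, ∀ i, N ≤ i → b i = 0 := by
    obtain ⟨N, hN⟩ := m.eventually_zero
    exact ⟨N, fun i hi => hN _ (by omega)⟩
  set ca : ℕ → ℕ := conj a with hca
  set cb : ℕ → ℕ := conj b with hcb
  have hca_le : ∀ {j i : ℕ}, ca j ≤ i ↔ a i ≤ j := fun {j i} => conj_le_iff hanti_a hz_a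
  have hcb_le : ∀ {j i : ℕ}, cb j ≤ i ↔ b i ≤ j := fun {j i} => conj_le_iff hanti_b hz_b
  have hcb_lt : ∀ {s j : ℕ}, s < cb j ↔ j < b s := by
    intro s j
    rw [← Nat.not_le, ← Nat.not_le, not_iff_not]
    exact hcb_le
  have hadef : ∀ i, a i = l.part (k + i) := fun _ => rfl
  have hbdef : ∀ i, b i = m.part (k + i) := fun _ => rfl
  have hlpart_tail : ∀ i, k ≤ i → l.part i = a (i - k) := by
    intro i hi; rw [hadef]; congr 1; omega
  have hmpart_tail : ∀ i, k ≤ i → m.part i = b (i - k) := by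
    intro i hi; rw [hbdef]; congr 1; omega
  set χ : ℕ → ℕ := fun j => ca j + cb j with hχ
  have hχdef : ∀ j, χ j = ca j + cb j := fun _ => rfl
  have hanti_χ : ∀ ⦃i j : ℕ⦄, i ≤ j → χ j ≤ χ i := fun i j h =>
    Nat.add_le_add (conj_anti hanti_a hz_a h) (conj_anti hanti_b hz_b h)
  have hz_χ : ∃ N, ∀ i, N ≤ i → χ i = 0 := by
    obtain ⟨N1, h1⟩ := conj_z hanti_a hz_a
    obtain ⟨N2, h2⟩ := conj_z hanti_b hz_b
    refine ⟨max N1 N2, fun i hi => ?_⟩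
    rw [hχdef]
    show conj a i + conj b i = 0
    rw [h1 i (by omega), h2 i (by omega)]
  set u : ℕ → ℕ := conj χ with hu
  have hu_le : ∀ {i j : ℕ}, u i ≤ j ↔ ca j + cb j ≤ i := fun {i j} =>
    conj_le_iff hanti_χ hz_χ
  have hu_anti : ∀ ⦃i j : ℕ⦄, i ≤ j → u j ≤ u i := conj_anti hanti_χ hz_χ
  have hu_z : ∃ N, ∀ i, N ≤ i → u i = 0 := conj_z hanti_χ hz_χ
  -- a ≤ u pointwise
  have hau : ∀ i, a i ≤ u i := by
    intro i
    rw [← hca_le]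
    have h1 : ca (u i) + cb (u i) ≤ i := hu_le.1 (le_refl (u i))
    omega
  -- u 0 ≤ max (a 0) (b 0)
  have hu0 : u 0 ≤ max (a 0) (b 0) := by
    rw [hu_le]
    have h1 : ca (max (a 0) (b 0)) = 0 := Nat.le_zero.1 (hca_le.2 (le_max_left _ _))
    have h2 : cb (max (a 0) (b 0)) = 0 := Nat.le_zero.1 (hcb_le.2 (le_max_right _ _))
    omega
  have ha0 : a 0 = l.part k := by rw [hadef, Nat.add_zero]
  have hb0 : b 0 = m.part k := by rw [hbdef, Nat.add_zero]
  -- the Schur constituent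
  set ν : Partition' := ⟨fun i => if i < k then l.part i + m.part i else u (i - k), by
      intro i j hij
      by_cases hj : j < k
      · have hi : i < k := lt_of_le_of_lt hij hj
        simp only [if_pos hi, if_pos hj]
        exact Nat.add_le_add (l.antitone hij) (m.antitone hij)
      · by_cases hi : i < k
        · simp only [if_pos hi, if_neg hj]
          calc u (j - k) ≤ u 0 := hu_anti (Nat.zero_le _)
          _ ≤ max (a 0) (b 0) := hu0
          _ ≤ max (l.part i) (m.part i) := by
              rw [ha0, hb0]
              exact max_le_max (l.antitone (by omega)) (m.antitone (by omega))
          _ ≤ l.part i + m.part i := by omega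
        · simp only [if_neg hi, if_neg hj]
          exact hu_anti (by omega), by
      obtain ⟨N, hN⟩ := hu_z
      exact ⟨k + N, fun i hi => by
        show (if i < k then _ else u (i - k)) = 0
        rw [if_neg (by omega)]
        exact hN _ (by omega)⟩⟩ with hν
  have hνhead : ∀ i, i < k → ν.part i = l.part i + m.part i := by
    intro i hi; show (if i < k then _ else _) = _; rw [if_pos hi]
  have hνtail : ∀ i, k ≤ i → ν.part i = u (i - k) := by
    intro i hi; show (if i < k then _ else _) = _; rw [if_neg (by omega)]
  -- ν.part k bound
  have hνk : ν.part k ≤ max (l.part k) (m.part k) := by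
    rw [hνtail k le_rfl, Nat.sub_self, ← ha0, ← hb0]
    exact hu0
  -- l ⊆ ν
  have hlν : ∀ i, l.part i ≤ ν.part i := by
    intro i
    by_cases hi : i < k
    · rw [hνhead i hi]; omega
    · rw [hνtail i (by omega), hlpart_tail i (by omega)]
      exact hau _
  -- skew characterizations
  have hskew_head : ∀ i j, i < k →
      (InSkew l ν i j ↔ (l.part i ≤ j ∧ j < l.part i + m.part i)) := by
    intro i j hi
    unfold InSkew
    rw [hνhead i hi]
  have hskew_tail : ∀ i j, k ≤ i →
      (InSkew l ν i j ↔ (ca j ≤ i - k ∧ i - k < ca j + cb j)) := by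
    intro i j hi
    unfold InSkew
    rw [hνtail i hi, hlpart_tail i hi]
    constructor
    · rintro ⟨h1, h2⟩
      refine ⟨hca_le.2 h1, ?_⟩
      have h3 := hu_le (i := i - k) (j := j)
      omega
    · rintro ⟨h1, h2⟩
      refine ⟨hca_le.1 h1, ?_⟩
      have h3 := hu_le (i := i - k) (j := j)
      omega
  -- the tableau
  set T : ℕ → ℕ → ℕ := fun i j => if i < k then i + 1 else k + 1 + ((i - k) - ca j) with hT
  have hT_head : ∀ i j, i < k → T i j = i + 1 := by
    intro i j hi; show (if i < k then _ else _) = _; rw [if_pos hi]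
  have hT_tail : ∀ i j, k ≤ i → T i j = k + 1 + ((i - k) - ca j) := by
    intro i j hi; show (if i < k then _ else _) = _; rw [if_neg (by omega)]
  refine ⟨ν, ⟨hlν, T, ?_, ?_, ?_, ?_, ?_⟩, hνk⟩
  · -- positivity
    intro i j _
    by_cases hi : i < k
    · rw [hT_head i j hi]; omega
    · rw [hT_tail i j (by omega)]; omega
  · -- rows weakly increasing
    intro i j j' hsk hsk' hjj
    by_cases hi : i < k
    · rw [hT_head i j hi, hT_head i j' hi]
    · rw [hT_tail i j (by omega), hT_tail i j' (by omega)]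
      have hconj : ca j' ≤ ca j := conj_anti hanti_a hz_a hjj
      omega
  · -- columns strictly increasing
    intro i i' j hsk hsk' hii
    by_cases hi' : i' < k
    · rw [hT_head i j (by omega), hT_head i' j hi']; omega
    · by_cases hi : i < k
      · rw [hT_head i j hi, hT_tail i' j (by omega)]; omega
      · have hfacts := (hskew_tail i j (by omega)).1 hsk
        rw [hT_tail i j (by omega), hT_tail i' j (by omega)]
        omega
  · -- type counts
    intro t
    by_cases ht : t < k
    · have hset : {p : ℕ × ℕ | InSkew l ν p.1 p.2 ∧ T p.1 p.2 = t + 1} =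
          (fun j => ((t : ℕ), j)) '' Set.Ico (l.part t) (l.part t + m.part t) := by
        ext ⟨i, j⟩
        simp only [Set.mem_setOf_eq, Set.mem_image, Set.mem_Ico]
        constructor
        · rintro ⟨hsk, hval⟩
          by_cases hi : i < k
          · rw [hT_head i j hi] at hval
            have hit : i = t := by omega
            subst hit
            have hs := (hskew_head i j hi).1 hsk
            exact ⟨j, ⟨hs.1, hs.2⟩, rfl⟩
          · rw [hT_tail i j (by omega)] at hval
            omega
        · rintro ⟨j', ⟨hj1, hj2⟩, heq⟩
          rw [Prod.mk.injEq] at heq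
          obtain ⟨rfl, rfl⟩ := heq
          exact ⟨(hskew_head t j' ht).2 ⟨hj1, hj2⟩, hT_head t j' ht⟩
      rw [hset, Set.ncard_image_of_injective _
        (fun x y hxy => by simpa using congrArg Prod.snd hxy), ncard_Ico]
      omega
    · have hset : {p : ℕ × ℕ | InSkew l ν p.1 p.2 ∧ T p.1 p.2 = t + 1} =
          (fun j => (k + (ca j + (t - k)), j)) '' Set.Iio (b (t - k)) := by
        ext ⟨i, j⟩
        simp only [Set.mem_setOf_eq, Set.mem_image, Set.mem_Iio]
        constructor
        · rintro ⟨hsk, hval⟩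
          by_cases hi : i < k
          · rw [hT_head i j hi] at hval
            omega
          · have hs := (hskew_tail i j (by omega)).1 hsk
            rw [hT_tail i j (by omega)] at hval
            refine ⟨j, ?_, ?_⟩
            · rw [← hcb_lt]; omega
            · rw [Prod.mk.injEq]
              exact ⟨by omega, rfl⟩
        · rintro ⟨j', hj', heq⟩
          rw [Prod.mk.injEq] at heq
          obtain ⟨rfl, rfl⟩ := heq
          have hcbj : t - k < cb j' := hcb_lt.2 hj'
          constructor
          · apply (hskew_tail _ j' (by omega)).2
            constructor <;> omega
          · rw [hT_tail _ j' (by omega)]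
            omega
      rw [hset, Set.ncard_image_of_injective _
        (fun x y hxy => by simpa using congrArg Prod.snd hxy), ncard_Iio,
        hmpart_tail t (by omega)]
  · -- lattice condition
    intro r c t
    have hBfin : {p : ℕ × ℕ | InSkew l ν p.1 p.2 ∧ (p.1 < r ∨ (p.1 = r ∧ c ≤ p.2)) ∧
        T p.1 p.2 = t + 1}.Finite := (skew_finite l ν).subset (fun p hp => hp.1)
    by_cases h1 : t + 2 ≤ k
    · -- both values in the head
      apply Set.ncard_le_ncard_of_injOn
        (fun p => ((t : ℕ), p.2 - l.part (t + 1) + l.part t)) ?_ ?_ hBfin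
      · rintro ⟨i, j⟩ ⟨hsk, hpre, hval⟩
        dsimp only at hsk hpre hval ⊢
        have hik : i < k := by
          by_contra hik
          rw [hT_tail i j (by omega)] at hval
          omega
        rw [hT_head i j hik] at hval
        have hit : i = t + 1 := by omega
        subst hit
        have hs := (hskew_head _ j hik).1 hsk
        have hmm : m.part (t + 1) ≤ m.part t := m.antitone (by omega)
        have hll : l.part (t + 1) ≤ l.part t := l.antitone (by omega)
        refine ⟨(hskew_head t _ (by omega)).2 ⟨by omega, by omega⟩, ?_, hT_head t _ (by omega)⟩
        left; omega
      · rintro ⟨i, j⟩ ⟨hsk, hpre, hval⟩ ⟨i', j'⟩ ⟨hsk', hpre', hval'⟩ heq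
        dsimp only at heq
        rw [Prod.mk.injEq] at heq
        have hik : i < k := by
          by_contra hik
          rw [hT_tail i j (by omega)] at hval
          omega
        have hik' : i' < k := by
          by_contra hik'
          rw [hT_tail i' j' (by omega)] at hval'
          omega
        rw [hT_head i j hik] at hval
        rw [hT_head i' j' hik'] at hval'
        have hs := (hskew_head i j hik).1 hsk
        have hs' := (hskew_head i' j' hik').1 hsk'
        have hit : i = t + 1 := by omega
        have hit' : i' = t + 1 := by omega
        subst hit
        subst hit'
        rw [Prod.mk.injEq]
        exact ⟨rfl, by omega⟩
    · by_cases h2 : k ≤ t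
      · -- both values in the tail
        apply Set.ncard_le_ncard_of_injOn (fun p => (p.1 - 1, p.2)) ?_ ?_ hBfin
        · rintro ⟨i, j⟩ ⟨hsk, hpre, hval⟩
          dsimp only at hsk hpre hval ⊢
          have hik : k ≤ i := by
            by_contra hik
            rw [hT_head i j (by omega)] at hval
            omega
          have hs := (hskew_tail i j hik).1 hsk
          rw [hT_tail i j hik] at hval
          have hi1 : k + 1 ≤ i := by omega
          refine ⟨(hskew_tail (i - 1) j (by omega)).2 ⟨by omega, by omega⟩, ?_, ?_⟩
          · left; omega
          · rw [hT_tail (i - 1) j (by omega)]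
            omega
        · rintro ⟨i, j⟩ ⟨hsk, hpre, hval⟩ ⟨i', j'⟩ ⟨hsk', hpre', hval'⟩ heq
          dsimp only at heq
          rw [Prod.mk.injEq] at heq
          have hik : k ≤ i := by
            by_contra hik
            rw [hT_head i j (by omega)] at hval
            omega
          have hik' : k ≤ i' := by
            by_contra hik'
            rw [hT_head i' j' (by omega)] at hval'
            omega
          have hs := (hskew_tail i j hik).1 hsk
          have hs' := (hskew_tail i' j' hik').1 hsk'
          rw [hT_tail i j hik] at hval
          rw [hT_tail i' j' hik'] at hval'
          rw [Prod.mk.injEq]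
          constructor
          · have : j = j' := heq.2
            subst this
            omega
          · exact heq.2
      · -- t + 1 = k : from tail to the last head row
        have hk : k = t + 1 := by omega
        apply Set.ncard_le_ncard_of_injOn
          (fun p => (k - 1, l.part (k - 1) + p.2)) ?_ ?_ hBfin
        · rintro ⟨i, j⟩ ⟨hsk, hpre, hval⟩
          dsimp only at hsk hpre hval ⊢
          have hik : k ≤ i := by
            by_contra hik
            rw [hT_head i j (by omega)] at hval
            omega
          have hs := (hskew_tail i j hik).1 hsk
          rw [hT_tail i j hik] at hval
          have hcbj : 0 < cb j := by omega
          have hjb : j < b 0 := hcb_lt.1 hcbj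
          have hmm : m.part k ≤ m.part (k - 1) := m.antitone (by omega)
          refine ⟨(hskew_head (k - 1) _ (by omega)).2 ⟨by omega, by omega⟩, ?_, ?_⟩
          · left; omega
          · rw [hT_head (k - 1) _ (by omega)]
            omega
        · rintro ⟨i, j⟩ ⟨hsk, hpre, hval⟩ ⟨i', j'⟩ ⟨hsk', hpre', hval'⟩ heq
          dsimp only at heq
          rw [Prod.mk.injEq] at heq
          have hik : k ≤ i := by
            by_contra hik
            rw [hT_head i j (by omega)] at hval
            omega
          have hik' : k ≤ i' := by
            by_contra hik'
            rw [hT_head i' j' (by omega)] at hval'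
            omega
          have hs := (hskew_tail i j hik).1 hsk
          have hs' := (hskew_tail i' j' hik').1 hsk'
          rw [hT_tail i j hik] at hval
          rw [hT_tail i' j' hik'] at hval'
          have hjj : j = j' := by omega
          subst hjj
          rw [Prod.mk.injEq]
          exact ⟨by omega, rfl⟩

end PP
namespace PP

/-- The contradiction for monomial constituents of the rectangle with itself. -/
lemma monRect {p q F G : ℕ} {n : Partition'} (hpq : p < q) (hGF : G < F)
    (hR : IsMonomialConstituent (rect q F) (rect q F) n)
    (hp : n.part p ≤ F) (hq : n.part q ≤ G) : False := by
  classical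
  obtain ⟨σ, τ, hn⟩ := hR
  -- an index where the permuted rectangle is big forces a small position
  have key : ∀ (ρ : Equiv.Perm ℕ), (∀ j, ρ j < q → j < q) → ∀ j, j < q → ρ j < q := by
    intro ρ hρ
    have hsub : (Finset.range q).image (fun x => ρ.symm x) ⊆ Finset.range q := by
      intro x hx
      simp only [Finset.mem_image, Finset.mem_range] at hx ⊢
      obtain ⟨y, hy, rfl⟩ := hx
      exact hρ _ (by simpa using hy)
    have hcard : ((Finset.range q).image (fun x => ρ.symm x)).card = q := by
      rw [Finset.card_image_of_injective _ ρ.symm.injective, Finset.card_range]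
    have heq := Finset.eq_of_subset_of_card_le hsub (by rw [hcard, Finset.card_range])
    intro j hj
    have : j ∈ (Finset.range q).image (fun x => ρ.symm x) := by
      rw [heq]; exact Finset.mem_range.2 hj
    simp only [Finset.mem_image, Finset.mem_range] at this
    obtain ⟨x, hx, hxj⟩ := this
    have : ρ j = x := by rw [← hxj]; simp
    omega
  have hτ : ∀ j, τ j < q → j < q := by
    intro j hjq
    by_contra hj
    have h1 : F ≤ n.part j := by
      rw [hn j, rect_part_lt hjq]; exact Nat.le_add_right _ _
    have h2 : n.part j ≤ n.part q := n.antitone (by omega)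
    omega
  have hστ : ∀ j, σ (τ j) < q → j < q := by
    intro j hjq
    by_contra hj
    have h1 : F ≤ n.part j := by
      rw [hn j, rect_part_lt hjq]; exact Nat.le_add_left _ _
    have h2 : n.part j ≤ n.part q := n.antitone (by omega)
    omega
  have hτ' := key τ hτ p hpq
  have hστ' := key (τ.trans σ) hστ p hpq
  rw [Equiv.trans_apply] at hστ'
  have : n.part p = F + F := by
    rw [hn p, rect_part_lt hτ', rect_part_lt hστ']
  omega

/-- The contradiction for Schur constituents of the rectangle with itself. -/
lemma schurRect {p q F G : ℕ} {n : Partition'} (hpq : p < q) (hGF : G < F)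
    (hR : IsSchurConstituent (rect q F) (rect q F) n)
    (hp : n.part p ≤ F) (hq : n.part q ≤ G) : False := by
  obtain ⟨hsub, T, hT⟩ := hR
  have hmid : ∀ i, p ≤ i → i < q → n.part i = F := by
    intro i h1 h2
    have ha : F ≤ n.part i := by
      have := hsub i; rwa [rect_part_lt h2] at this
    have hb : n.part i ≤ n.part p := n.antitone h1
    omega
  obtain ⟨h1, h2, h3, h4, h5⟩ := hT
  have hcount : Set.ncard {x : ℕ × ℕ | InSkew (rect q F) n x.1 x.2 ∧ T x.1 x.2 = p + 1} = F := by
    rw [h4 p, rect_part_lt hpq]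
  have hle : F ≤ G := by
    rw [← hcount, ← ncard_Iio G]
    apply Set.ncard_le_ncard_of_injOn (fun x => x.2)
    · rintro ⟨i, j⟩ ⟨hsk, hval⟩
      dsimp only at hsk hval ⊢
      have hrb := lr_rowBound ⟨h1, h2, h3, h4, h5⟩ i j hsk
      have hpi : p ≤ i := by omega
      have hiq : q ≤ i := by
        by_contra hiq
        have := hmid i hpi (by omega)
        have := hsk.1
        have := hsk.2
        rw [rect_part_lt (show i < q by omega)] at *
        omega
      exact Set.mem_Iio.2 (by calc j < n.part i := hsk.2
        _ ≤ n.part q := n.antitone hiq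
        _ ≤ G := hq)
    · rintro ⟨i, j⟩ ⟨hsk, hval⟩ ⟨i', j'⟩ ⟨hsk', hval'⟩ hj
      dsimp only at hsk hval hsk' hval' hj
      subst hj
      have hii : i = i' := by
        rcases Nat.lt_trichotomy i i' with h | h | h
        · have := h3 i i' j hsk hsk' h; omega
        · exact h
        · have := h3 i' i j hsk' hsk h; omega
      rw [hii]
  omega

end PP
namespace PP

variable (R : Partition' → Partition' → Partition' → Prop)

/-- backward direction: the classified ideals are prime. -/
lemma backward
    (hkey : ∀ l m k, ∃ n, R l m n ∧ n.part k ≤ max (l.part k) (m.part k))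
    (I : Set Partition')
    (hclass : I = ∅ ∨ ∃ k c, I = {x : Partition' | c < x.part k}) :
    I ≠ Set.univ ∧ ∀ l m : Partition', (∀ n : Partition', R l m n → n ∈ I) → l ∈ I ∨ m ∈ I := by
  rcases hclass with rfl | ⟨k, c, rfl⟩
  · refine ⟨fun h => ?_, fun l m h => ?_⟩
    · have : pzero ∈ (∅ : Set Partition') := h ▸ Set.mem_univ _
      exact absurd this (Set.notMem_empty _)
    · obtain ⟨n, hn, _⟩ := hkey l m 0
      exact absurd (h n hn) (Set.notMem_empty n)
  · constructor
    · intro h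
      have : pzero ∈ {x : Partition' | c < x.part k} := h ▸ Set.mem_univ _
      simp only [Set.mem_setOf_eq] at this
      exact absurd this (by show ¬ c < 0; omega)
    · intro l m h
      obtain ⟨n, hn, hle⟩ := hkey l m k
      have hc := h n hn
      simp only [Set.mem_setOf_eq] at hc ⊢
      rcases le_or_gt (l.part k) (m.part k) with hlm | hlm
      · right; omega
      · left; omega

/-- forward direction: a prime partition ideal is classified. -/
lemma forward
    (hcont : ∀ l m n, R l m n → (∀ i, l.part i ≤ n.part i) ∧ (∀ i, m.part i ≤ n.part i))
    (hrect : ∀ p q F G (n : Partition'), p < q → G < F → R (rect q F) (rect q F) n →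
      n.part p ≤ F → n.part q ≤ G → False)
    (I : Set Partition') (hideal : IsPartitionIdeal I) (hne : I ≠ Set.univ)
    (hcl : ∀ l m : Partition', (∀ n : Partition', R l m n → n ∈ I) → l ∈ I ∨ m ∈ I) :
    I = ∅ ∨ ∃ k c, I = {x : Partition' | c < x.part k} := by
  classical
  by_cases hIe : I = ∅
  · exact Or.inl hIe
  right
  obtain ⟨w, hw⟩ := (Set.ne_univ_iff_exists_notMem I).1 hne
  have hconst : ∀ l m, l ∉ I → m ∉ I → ∃ n, R l m n ∧ n ∉ I := by
    intro l m hl hm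
    by_contra h
    push_neg at h
    rcases hcl l m (fun n hn => by
      by_contra hnn; exact absurd (h n hn) (by simp [hnn])) with h' | h'
    · exact hl h'
    · exact hm h'
  have hdown : ∀ z y : Partition', z ∉ I → (∀ i, y.part i ≤ z.part i) → y ∉ I :=
    fun z y hz hy hyI => hz (hideal y z hyI hy)
  have hjoin : ∀ l m, l ∉ I → m ∉ I → pjoin l m ∉ I := by
    intro l m hl hm
    obtain ⟨n, hR, hn⟩ := hconst l m hl hm
    obtain ⟨h1, h2⟩ := hcont l m n hR
    intro hmem
    exact hn (hideal _ _ hmem (fun i => max_le (h1 i) (h2 i)))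
  have hmulti : ∀ (v : ℕ → ℕ) (M : ℕ), (∀ i, i < M → ∃ z, z ∉ I ∧ v i ≤ z.part i) →
      ∃ z, z ∉ I ∧ ∀ i, i < M → v i ≤ z.part i := by
    intro v M
    induction M with
    | zero => exact fun _ => ⟨w, hw, fun i hi => absurd hi (by omega)⟩
    | succ M IH =>
      intro h
      obtain ⟨z, hz, hzv⟩ := IH (fun i hi => h i (by omega))
      obtain ⟨z', hz', hzM⟩ := h M (by omega)
      refine ⟨pjoin z z', hjoin z z' hz hz', fun i hi => ?_⟩
      show v i ≤ max (z.part i) (z'.part i)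
      rcases Nat.lt_or_ge i M with h' | h'
      · exact le_trans (hzv i h') (le_max_left _ _)
      · have : i = M := by omega
        subst this
        exact le_trans hzM (le_max_right _ _)
  -- there is a bounded index
  have hQ : ∃ i, ∃ c, ∀ z, z ∉ I → z.part i ≤ c := by
    by_contra h
    push_neg at h
    obtain ⟨η, hη⟩ := Set.nonempty_iff_ne_empty.2 hIe
    obtain ⟨Nη, hNη⟩ := η.eventually_zero
    obtain ⟨z, hz, hzv⟩ := hmulti (fun i => η.part i) Nη (fun i hi => by
      obtain ⟨z, hz1, hz2⟩ := h i (η.part i)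
      exact ⟨z, hz1, le_of_lt hz2⟩)
    refine hz (hideal η z hη (fun i => ?_))
    rcases Nat.lt_or_ge i Nη with h' | h'
    · exact hzv i h'
    · rw [hNη i h']; exact Nat.zero_le _
  obtain ⟨p, ⟨cp, hcp⟩, hpmin⟩ :
      ∃ p, (∃ c, ∀ z, z ∉ I → z.part p ≤ c) ∧
        (∀ i, i < p → ∀ c : ℕ, ∃ z, z ∉ I ∧ c < z.part i) := by
    refine ⟨Nat.find hQ, Nat.find_spec hQ, fun i hi c => ?_⟩
    have := Nat.find_min hQ hi
    push_neg at this
    obtain ⟨z, hz1, hz2⟩ := this c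
    exact ⟨z, hz1, hz2⟩
  obtain ⟨F, hFspec, hFmax⟩ :
      ∃ F, (∃ z, z ∉ I ∧ F ≤ z.part p) ∧ (∀ z, z ∉ I → z.part p ≤ F) := by
    refine ⟨Nat.findGreatest (fun v => ∃ z, z ∉ I ∧ v ≤ z.part p) cp,
      Nat.findGreatest_spec (P := fun v => ∃ z, z ∉ I ∧ v ≤ z.part p)
        (Nat.zero_le cp) ⟨w, hw, Nat.zero_le _⟩, fun z hz => ?_⟩
    exact Nat.le_findGreatest (hcp z hz) ⟨z, hz, le_rfl⟩
  -- every index admits an element of the complement with part ≥ F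
  have hALL : ∀ q, ∃ z, z ∉ I ∧ F ≤ z.part q := by
    by_contra h
    push_neg at h
    have hQex : ∃ q, ∀ z, z ∉ I → z.part q < F := by
      obtain ⟨q0, hq0⟩ := h
      exact ⟨q0, fun z hz => by
        have := hq0 z
        by_contra hc
        push_neg at hc
        exact absurd (this hz) (by omega)⟩
    obtain ⟨q, hq, hqmin⟩ :
        ∃ q, (∀ z, z ∉ I → z.part q < F) ∧ (∀ i, i < q → ∃ z, z ∉ I ∧ F ≤ z.part i) := by
      refine ⟨Nat.find hQex, Nat.find_spec hQex, fun i hi => ?_⟩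
      have := Nat.find_min hQex hi
      push_neg at this
      obtain ⟨z, hz1, hz2⟩ := this
      exact ⟨z, hz1, hz2⟩
    have hpq : p < q := by
      by_contra hc
      push_neg at hc
      obtain ⟨z, hz, hzF⟩ := hFspec
      have h1 := hq z hz
      have h2 := z.antitone hc
      omega
    obtain ⟨G, hGspec, hGmax⟩ :
        ∃ G, (∃ z, z ∉ I ∧ G ≤ z.part q) ∧ (∀ z, z ∉ I → z.part q ≤ G) := by
      refine ⟨Nat.findGreatest (fun v => ∃ z, z ∉ I ∧ v ≤ z.part q) F,
        Nat.findGreatest_spec (P := fun v => ∃ z, z ∉ I ∧ v ≤ z.part q)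
          (Nat.zero_le F) ⟨w, hw, Nat.zero_le _⟩, fun z hz => ?_⟩
      exact Nat.le_findGreatest (le_of_lt (hq z hz)) ⟨z, hz, le_rfl⟩
    have hGF : G < F := by
      obtain ⟨z, hz, hzG⟩ := hGspec
      have := hq z hz
      omega
    have hg : rect q F ∉ I := by
      obtain ⟨z, hz, hzall⟩ := hmulti (fun _ => F) q hqmin
      apply hdown z _ hz
      intro i
      show (if i < q then F else 0) ≤ z.part i
      split_ifs with h'
      · exact hzall i h'
      · exact Nat.zero_le _
    obtain ⟨n, hR, hn⟩ := hconst _ _ hg hg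
    exact hrect p q F G n hpq hGF hR (hFmax n hn) (hGmax n hn)
  refine ⟨p, F, ?_⟩
  ext x
  simp only [Set.mem_setOf_eq]
  constructor
  · intro hx
    by_contra hc
    push_neg at hc
    obtain ⟨Nx, hNx⟩ := x.eventually_zero
    have hzs : ∀ i, i < Nx → ∃ z, z ∉ I ∧ x.part i ≤ z.part i := by
      intro i hi
      rcases Nat.lt_or_ge i p with h' | h'
      · obtain ⟨z, hz1, hz2⟩ := hpmin i h' (x.part i)
        exact ⟨z, hz1, le_of_lt hz2⟩
      · obtain ⟨z, hz1, hz2⟩ := hALL i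
        exact ⟨z, hz1, le_trans (le_trans (x.antitone h') hc) hz2⟩
    obtain ⟨z, hz, hzv⟩ := hmulti (fun i => x.part i) Nx hzs
    refine hz (hideal x z hx (fun i => ?_))
    rcases Nat.lt_or_ge i Nx with h' | h'
    · exact hzv i h'
    · rw [hNx i h']; exact Nat.zero_le _
  · intro hx
    by_contra hxI
    exact absurd (hFmax x hxI) (by omega)

end PP

/-- A partition ideal is monomial prime if and only if it is Schur prime. -/
theorem monomialPrime_iff_schurPrime (I : Set Partition')
    (hideal : IsPartitionIdeal I) :
    IsMonomialPrime I ↔ IsSchurPrime I := by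
  constructor
  · intro h
    have hclass := PP.forward IsMonomialConstituent
      (fun l m n hR => PP.mono_constituent_contains hR)
      (fun p q F G n a b c d e => PP.monRect a b c d e) I hideal h.1 h.2
    exact PP.backward IsSchurConstituent PP.schurKey I hclass
  · intro h
    have hclass := PP.forward IsSchurConstituent
      (fun l m n hR => PP.schur_constituent_contains hR)
      (fun p q F G n a b c d e => PP.schurRect a b c d e) I hideal h.1 h.2
    exact PP.backward IsMonomialConstituent PP.monKey I hclass
end

section
/- Let f be a formal power series with integer coefficients and constant term 1. If g, h and g', h' are two pairs of integer polynomials with constant term 1 such that f·h = g and f·h' = g' as formal power series, all complex roots of g and of g' are negative real numbers, and all complex roots of h and of h' are positive real numbers, then g = g' and h = h'. -/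
/-! Cross-multiplying the two representations gives `g * h' = g' * h` in `ℤ[X]`. The sign
conditions on the roots make `g` coprime to `h` and `g'` coprime to `h'` over `ℂ`, so `g` and `g'`
divide each other there and differ by a nonzero constant; comparing constant terms shows the
constant is `1`. -/

open Polynomial

theorem Polynomial.mul_eq_mul_of_coe_mul_eq {R : Type*} [CommSemiring R] {f : PowerSeries R}
    {g h g' h' : R[X]} (heq : f * (h : PowerSeries R) = g)
    (heq' : f * (h' : PowerSeries R) = g') : g * h' = g' * h := by
  rw [← coe_inj, coe_mul, coe_mul, ← heq, ← heq', mul_right_comm]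

theorem Polynomial.isCoprime_of_re_neg_of_re_pos {p q : ℂ[X]}
    (hp : ∀ z, p.IsRoot z → z.re < 0) (hq : ∀ z, q.IsRoot z → 0 < z.re) : IsCoprime p q := by
  refine (isCoprime_iff_aeval_ne_zero_of_isAlgClosed (k := ℂ) ℂ p q).2 fun z => ?_
  by_contra! hz
  have := hp z (by simpa using hz.1)
  have := hq z (by simpa using hz.2)
  linarith

theorem Polynomial.eq_of_associated_of_coeff_zero_eq {R : Type*} [CommRing R] [IsDomain R]
    {p q : R[X]} (hpq : Associated p q) (h0 : p.coeff 0 = q.coeff 0) (hp0 : p.coeff 0 ≠ 0) :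
    p = q := by
  obtain ⟨u, rfl⟩ := hpq
  obtain ⟨r, -, hr⟩ := Polynomial.isUnit_iff.mp u.isUnit
  rw [← hr, coeff_mul_C] at h0
  have hr1 : r = 1 := mul_left_cancel₀ hp0 (h0.symm.trans (mul_one _).symm)
  rw [← hr, hr1, C_1, mul_one]

theorem Polynomial.eq_and_eq_of_mul_eq_mul_of_isCoprime {R : Type*} [CommRing R] [IsDomain R]
    {p q p' q' : R[X]} (hpq : IsCoprime p q) (hpq' : IsCoprime p' q') (hmul : p * q' = p' * q)
    (h0 : p.coeff 0 = p'.coeff 0) (hp0 : p.coeff 0 ≠ 0) : p = p' ∧ q = q' := by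
  have hdvd : p ∣ p' := hpq.dvd_of_dvd_mul_right ⟨q', hmul.symm⟩
  have hdvd' : p' ∣ p := hpq'.dvd_of_dvd_mul_right ⟨q, hmul⟩
  have hp : p = p' := eq_of_associated_of_coeff_zero_eq (associated_of_dvd_dvd hdvd hdvd') h0 hp0
  have hpne : p ≠ 0 := fun h => hp0 (by rw [h, coeff_zero])
  subst hp
  exact ⟨rfl, (mul_left_cancel₀ hpne hmul).symm⟩

theorem rational_representation_unique_general (f : PowerSeries ℤ)
    (g h g' h' : Polynomial ℤ)
    (hg0 : g.coeff 0 = 1)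
    (hg0' : g'.coeff 0 = 1)
    (heq : f * (h : PowerSeries ℤ) = (g : PowerSeries ℤ))
    (heq' : f * (h' : PowerSeries ℤ) = (g' : PowerSeries ℤ))
    (hgroots : ∀ z : ℂ, (g.map (Int.castRingHom ℂ)).IsRoot z → z.im = 0 ∧ z.re < 0)
    (hgroots' : ∀ z : ℂ, (g'.map (Int.castRingHom ℂ)).IsRoot z → z.im = 0 ∧ z.re < 0)
    (hhroots : ∀ z : ℂ, (h.map (Int.castRingHom ℂ)).IsRoot z → z.im = 0 ∧ 0 < z.re)
    (hhroots' : ∀ z : ℂ, (h'.map (Int.castRingHom ℂ)).IsRoot z → z.im = 0 ∧ 0 < z.re) :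
    g = g' ∧ h = h' := by
  have hmul : g.map (Int.castRingHom ℂ) * h'.map (Int.castRingHom ℂ)
      = g'.map (Int.castRingHom ℂ) * h.map (Int.castRingHom ℂ) := by
    rw [← Polynomial.map_mul, ← Polynomial.map_mul, mul_eq_mul_of_coe_mul_eq heq heq']
  obtain ⟨hg, hh⟩ := eq_and_eq_of_mul_eq_mul_of_isCoprime
    (isCoprime_of_re_neg_of_re_pos (fun z hz => (hgroots z hz).2) fun z hz => (hhroots z hz).2)
    (isCoprime_of_re_neg_of_re_pos (fun z hz => (hgroots' z hz).2) fun z hz => (hhroots' z hz).2)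
    hmul (by simp [hg0, hg0']) (by simp [hg0])
  have hinj := map_injective (Int.castRingHom ℂ) Int.cast_injective
  exact ⟨hinj hg, hinj hh⟩

/-- Uniqueness of the numerator and denominator: if `f·h = g` and `f·h' = g'`
with all complex roots of `g, g'` negative reals and all complex roots of
`h, h'` positive reals, and all four polynomials have constant term `1`,
then `g = g'` and `h = h'`. -/
theorem rational_representation_unique (f : PowerSeries ℤ)
    (hf : PowerSeries.constantCoeff f = 1)
    (g h g' h' : Polynomial ℤ)
    (hg0 : g.coeff 0 = 1) (hh0 : h.coeff 0 = 1)
    (hg0' : g'.coeff 0 = 1) (hh0' : h'.coeff 0 = 1)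
    (heq : f * (h : PowerSeries ℤ) = (g : PowerSeries ℤ))
    (heq' : f * (h' : PowerSeries ℤ) = (g' : PowerSeries ℤ))
    (hgroots : ∀ z : ℂ, (g.map (Int.castRingHom ℂ)).IsRoot z → z.im = 0 ∧ z.re < 0)
    (hgroots' : ∀ z : ℂ, (g'.map (Int.castRingHom ℂ)).IsRoot z → z.im = 0 ∧ z.re < 0)
    (hhroots : ∀ z : ℂ, (h.map (Int.castRingHom ℂ)).IsRoot z → z.im = 0 ∧ 0 < z.re)
    (hhroots' : ∀ z : ℂ, (h'.map (Int.castRingHom ℂ)).IsRoot z → z.im = 0 ∧ 0 < z.re) :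
    g = g' ∧ h = h' :=
  rational_representation_unique_general f g h g' h' hg0 hg0' heq heq' hgroots hgroots' hhroots
    hhroots'
end

section
/- Let S be the set of all functions a : ℕ × ℕ → {0,1} satisfying, for all i, j: a(i,j) = 0 if and only if both a(i+1,j) = 0 and a(i,j+1) = 0. Then the map from ℕ² ∪ {∞} to S sending a pair (x,y) to the function a defined by a(i,j) = 0 if and only if (i ≥ x and j ≥ y), and sending ∞ to the constant function with value 1, is a well-defined bijection. -/
/-- The map `ℕ² ∪ {∞} → (ℕ × ℕ → Bool)` (with `∞` encoded as `none`, and with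
`Bool` a plain two-element set, `false` playing the role of `0`): a pair
`(x, y)` is sent to the function `a` with `a (i, j) = 0` iff `i ≥ x` and
`j ≥ y`, and `∞` is sent to the constant function `1`. -/
def wittBoolMap : Option (ℕ × ℕ) → (ℕ × ℕ → Bool)
  | Option.some (x, y) => fun p => if x ≤ p.1 ∧ y ≤ p.2 then false else true
  | Option.none => fun _ => true

private lemma witt_up {a : ℕ × ℕ → Bool}
    (ha : ∀ i j : ℕ, (a (i, j) = false ↔ (a (i + 1, j) = false ∧ a (i, j + 1) = false)))
    {i j : ℕ} (h : a (i, j) = false) {i' j' : ℕ} (hi : i ≤ i') (hj : j ≤ j') :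
    a (i', j') = false := by
  have h1 : ∀ k, a (i + k, j) = false := by
    intro k
    induction k with
    | zero => exact h
    | succ k ih => exact ((ha (i + k) j).mp ih).1
  have h2 : ∀ k l, a (i + k, j + l) = false := by
    intro k l
    induction l with
    | zero => exact h1 k
    | succ l ih => exact ((ha (i + k) (j + l)).mp ih).2
  have e1 : i' = i + (i' - i) := by omega
  have e2 : j' = j + (j' - j) := by omega
  rw [e1, e2]
  exact h2 _ _

private lemma witt_rect {a : ℕ × ℕ → Bool}
    (ha : ∀ i j : ℕ, (a (i, j) = false ↔ (a (i + 1, j) = false ∧ a (i, j + 1) = false))) :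
    ∀ n i j i' j', i ≤ i' → j' ≤ j → i' - i + (j - j') = n →
      a (i, j) = false → a (i', j') = false → a (i, j') = false := by
  intro n
  induction n using Nat.strong_induction_on with
  | _ n ih =>
    intro i j i' j' hi hj hn h1 h2
    rcases Nat.eq_or_lt_of_le hi with rfl | hi'
    · exact h2
    rcases Nat.eq_or_lt_of_le hj with rfl | hj'
    · exact h1
    refine (ha i j').mpr ⟨?_, ?_⟩
    · exact ih (i' - (i + 1) + (j - j')) (by omega) (i + 1) j i' j'
        (by omega) hj rfl ((ha i j).mp h1).1 h2
    · exact ih (i' - i + (j - (j' + 1))) (by omega) i j i' (j' + 1)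
        hi (by omega) rfl h1 (witt_up ha h2 le_rfl (by omega))

open Classical in
/-- `wittBoolMap` is a well-defined bijection from `ℕ² ∪ {∞}` onto the set `S`
of functions `a : ℕ × ℕ → {0, 1}` satisfying
`a (i, j) = 0 ↔ (a (i+1, j) = 0 ∧ a (i, j+1) = 0)` for all `i, j`. -/
theorem wittBoolMap_bijOn :
    Set.BijOn wittBoolMap Set.univ
      {a : ℕ × ℕ → Bool | ∀ i j : ℕ,
        (a (i, j) = false ↔ (a (i + 1, j) = false ∧ a (i, j + 1) = false))} := by
  refine ⟨?_, ?_, ?_⟩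
  · -- MapsTo
    rintro (⟨⟩ | ⟨x, y⟩) -
    · intro i j
      simp [wittBoolMap]
    · intro i j
      simp only [wittBoolMap]
      have e : ∀ u v : ℕ, (if x ≤ u ∧ y ≤ v then false else true) = false ↔
          (x ≤ u ∧ y ≤ v) := by
        intro u v
        split_ifs with h <;> simp [h]
      rw [e, e, e]
      omega
  · -- InjOn
    rintro (⟨⟩ | ⟨x, y⟩) - (⟨⟩ | ⟨x', y'⟩) - h
    · rfl
    · have := congrFun h (x', y')
      simp [wittBoolMap] at this
    · have := congrFun h (x, y)
      simp [wittBoolMap] at this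
    · have h1 := congrFun h (x', y')
      have h2 := congrFun h (x, y)
      simp only [wittBoolMap] at h1 h2
      split_ifs at h1 h2 <;> simp_all <;> omega
  · -- SurjOn
    intro a ha
    simp only [Set.mem_setOf_eq] at ha
    by_cases hex : ∃ p : ℕ × ℕ, a p = false
    · obtain ⟨⟨i₀, j₀⟩, h₀⟩ := hex
      have hP : ∃ i, ∃ j, a (i, j) = false := ⟨i₀, j₀, h₀⟩
      have hQ : ∃ j, ∃ i, a (i, j) = false := ⟨j₀, i₀, h₀⟩
      set x := Nat.find hP with hxdef
      set y := Nat.find hQ with hydef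
      obtain ⟨j₁, hj₁⟩ := Nat.find_spec hP
      obtain ⟨i₁, hi₁⟩ := Nat.find_spec hQ
      have hx₁ : x ≤ i₁ := Nat.find_min' hP ⟨y, hi₁⟩
      have hy₁ : y ≤ j₁ := Nat.find_min' hQ ⟨x, hj₁⟩
      have hxy : a (x, y) = false := witt_rect ha _ x j₁ i₁ y hx₁ hy₁ rfl hj₁ hi₁
      refine ⟨some (x, y), Set.mem_univ _, ?_⟩
      funext ⟨i, j⟩
      simp only [wittBoolMap]
      split_ifs with h
      · exact (witt_up ha hxy h.1 h.2).symm
      · by_contra hcon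
        have hf : a (i, j) = false := by
          cases hval : a (i, j) with
          | false => rfl
          | true => exact absurd hval.symm hcon
        have hxi : x ≤ i := Nat.find_min' hP ⟨j, hf⟩
        have hyj : y ≤ j := Nat.find_min' hQ ⟨i, hf⟩
        exact h ⟨hxi, hyj⟩
    · refine ⟨none, Set.mem_univ _, ?_⟩
      push_neg at hex
      funext p
      simpa [wittBoolMap] using (hex p)
end
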